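/- arXiv:1803.07251 — 7 statements merged into one kernel-verified Lean document; each statement's English description precedes it below -/
import Mathlib

section
/- Let a > 0 and let c < e^{-1}. There is no differentiable function g : ℝ → ℝ satisfying 0 < g(t) ≤ c for all t ∈ ℝ and g'(t) = a · g(t) · log(g(t)) for all t ∈ ℝ. -/
/-- ODE content of Corollary 1.2(1) of the paper: for `a > 0` and `c < e⁻¹` there is no
differentiable `g : ℝ → ℝ` with `0 < g ≤ c` solving `g' = a g log g` on all of ℝ. -/
theorem no_bounded_solution_pos_a (a c : ℝ) (ha : 0 < a) (hc : c < Real.exp (-1)) :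
    ¬ ∃ g : ℝ → ℝ, Differentiable ℝ g ∧ (∀ t : ℝ, 0 < g t ∧ g t ≤ c) ∧
      (∀ t : ℝ, deriv g t = a * g t * Real.log (g t)) := by
  rintro ⟨g, hg, hb, hode⟩
  set h : ℝ → ℝ := fun t => Real.log (g t) with hh
  have hpos : ∀ t, 0 < g t := fun t => (hb t).1
  -- h has derivative a * h t
  have hderiv : ∀ t, HasDerivAt h (a * h t) t := by
    intro t
    have h1 : HasDerivAt g (deriv g t) t := (hg t).hasDerivAt
    have h2 := (Real.hasDerivAt_log (hpos t).ne').comp t h1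
    have : (g t)⁻¹ * deriv g t = a * h t := by
      rw [hode t]
      have hne := (hpos t).ne'
      field_simp [hh]
      ring
    rwa [this] at h2
  -- F t = h t * exp (-a*t) is constant
  have hF : ∀ t, HasDerivAt (fun t => h t * Real.exp (-a * t)) 0 t := by
    intro t
    have h1 := (hderiv t).mul (((Real.hasDerivAt_exp (-a * t)).comp t
      ((hasDerivAt_id t).const_mul (-a))))
    refine h1.congr_deriv ?_
    change a * h t * Real.exp (-a * t) + h t * (Real.exp (-a * t) * (-a * 1)) = 0
    ring
  have hconst : ∀ t, h t * Real.exp (-a * t) = h 0 := by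
    intro t
    have := is_const_of_deriv_eq_zero (f := fun t => h t * Real.exp (-a * t))
      (fun t => (hF t).differentiableAt) (fun t => (hF t).deriv) t 0
    simpa using this
  have hval : ∀ t, h t = h 0 * Real.exp (a * t) := by
    intro t
    have := hconst t
    have he : Real.exp (-a * t) ≠ 0 := Real.exp_ne_zero _
    have he2 : Real.exp (-a * t) * Real.exp (a * t) = 1 := by
      rw [← Real.exp_add]; ring_nf; exact Real.exp_zero
    calc h t = (h t * Real.exp (-a * t)) * Real.exp (a * t) := by
              rw [mul_assoc, he2, mul_one]
      _ = h 0 * Real.exp (a * t) := by rw [hconst t]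
  -- h t ≤ log c < -1
  have hcpos : 0 < c := lt_of_lt_of_le (hpos 0) (hb 0).2
  have hlogc : Real.log c < -1 := by
    have := Real.log_lt_log hcpos hc
    rwa [Real.log_exp] at this
  have hle : ∀ t, h t < -1 := fun t =>
    lt_of_le_of_lt (Real.log_le_log (hpos t) (hb t).2) hlogc
  -- pick t very negative
  set b : ℝ := -(h 0) with hb0
  have hb1 : 1 < b := by have := hle 0; simp only [hb0]; linarith
  set t : ℝ := -(Real.log (2 * b)) / a with ht
  have hexp : Real.exp (a * t) = (2 * b)⁻¹ := by
    have : a * t = -(Real.log (2 * b)) := by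
      rw [ht]; field_simp
    rw [this, Real.exp_neg, Real.exp_log (by linarith)]
  have : h t = -(1/2) := by
    rw [hval t, hexp]
    have : h 0 = -b := by rw [hb0]; ring
    rw [this]
    field_simp
  have := hle t
  linarith
end

section
/- Let a < 0 and let 0 < c ≤ D < 1. There is no differentiable function g : ℝ → ℝ satisfying c ≤ g(t) ≤ D for all t ∈ ℝ and g'(t) = a · g(t) · log(g(t)) for all t ∈ ℝ. -/
/-!
Along a positive solution of `g' = a g log g`, the function `h = -log g` solves the linear
equation `h' = a h`, so `h t = h 0 * exp (a t)`. If `0 < c ≤ g ≤ D < 1` then `h 0 > 0` and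
`h ≤ -log c`, while `exp (a t)` is unbounded for `a ≠ 0`.
-/

open Real Set

theorem eq_mul_exp_of_hasDerivAt_mul_self {h : ℝ → ℝ} {a : ℝ}
    (hh : ∀ t, HasDerivAt h (a * h t) t) (t : ℝ) : h t = h 0 * exp (a * t) := by
  have hk : ∀ s, HasDerivAt (fun u => h u * exp (-(a * u))) 0 s := by
    intro s
    have hexp : HasDerivAt (fun u => exp (-(a * u))) (exp (-(a * s)) * -(a * 1)) s :=
      (((hasDerivAt_id s).const_mul a).neg).exp
    have hprod := (hh s).mul hexp
    rwa [show a * h s * exp (-(a * s)) + h s * (exp (-(a * s)) * -(a * 1)) = 0 by ring] at hprod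
  have hconst : h t * exp (-(a * t)) = h 0 * exp (-(a * 0)) :=
    is_const_of_deriv_eq_zero (fun s => (hk s).differentiableAt) (fun s => (hk s).deriv) t 0
  calc h t = h t * exp (-(a * t)) * exp (a * t) := by rw [mul_assoc, ← exp_add]; simp
    _ = h 0 * exp (a * t) := by rw [hconst]; simp

theorem not_bddAbove_range_of_hasDerivAt_mul_self {h : ℝ → ℝ} {a : ℝ} (ha : a ≠ 0)
    (hh : ∀ t, HasDerivAt h (a * h t) t) (h0 : 0 < h 0) : ¬ BddAbove (range h) := by
  rintro ⟨M, hM⟩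
  set y := (|M| + 1) / h 0
  have hy : 0 < y := by positivity
  have hval : h (log y / a) = |M| + 1 := by
    rw [eq_mul_exp_of_hasDerivAt_mul_self hh, mul_div_cancel₀ _ ha, exp_log hy,
      mul_div_cancel₀ _ h0.ne']
  have hle : h (log y / a) ≤ M := hM ⟨log y / a, rfl⟩
  linarith [le_abs_self M]

theorem hasDerivAt_neg_log_of_hasDerivAt_mul_log {g : ℝ → ℝ} {a t : ℝ}
    (hg : HasDerivAt g (a * g t * log (g t)) t) (hgt : g t ≠ 0) :
    HasDerivAt (fun s => -log (g s)) (a * -log (g t)) t := by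
  have hlog := (hg.log hgt).neg
  rwa [show -(a * g t * log (g t) / g t) = a * -log (g t) by field_simp] at hlog

theorem no_bounded_solution_neg_a_general (a c D : ℝ) (ha : a < 0) (hc : 0 < c)
    (hD : D < 1) :
    ¬ ∃ g : ℝ → ℝ, Differentiable ℝ g ∧ (∀ t : ℝ, c ≤ g t ∧ g t ≤ D) ∧
      (∀ t : ℝ, deriv g t = a * g t * Real.log (g t)) := by
  rintro ⟨g, hg, hbound, hode⟩
  have hpos : ∀ t, 0 < g t := fun t => hc.trans_le (hbound t).1
  have hh : ∀ t, HasDerivAt (fun s => -log (g s)) (a * -log (g t)) t := fun t =>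
    hasDerivAt_neg_log_of_hasDerivAt_mul_log (hode t ▸ (hg t).hasDerivAt) (hpos t).ne'
  have h0 : 0 < -log (g 0) := neg_pos.mpr (log_neg (hpos 0) ((hbound 0).2.trans_lt hD))
  refine not_bddAbove_range_of_hasDerivAt_mul_self ha.ne hh h0 ⟨-log c, ?_⟩
  rintro _ ⟨t, rfl⟩
  exact neg_le_neg (log_le_log hc (hbound t).1)

/-- ODE content of the first part of Corollary 1.2(2) of the paper: for `a < 0` and
`0 < c ≤ D < 1` there is no differentiable `g : ℝ → ℝ` with `c ≤ g ≤ D` solving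
`g' = a g log g` on all of ℝ. -/
theorem no_bounded_solution_neg_a (a c D : ℝ) (ha : a < 0) (hc : 0 < c) (hcD : c ≤ D)
    (hD : D < 1) :
    ¬ ∃ g : ℝ → ℝ, Differentiable ℝ g ∧ (∀ t : ℝ, c ≤ g t ∧ g t ≤ D) ∧
      (∀ t : ℝ, deriv g t = a * g t * Real.log (g t)) :=
  no_bounded_solution_neg_a_general a c D ha hc hD
end

section
/- Let a < 0 and let g : ℝ → ℝ be a differentiable function such that g'(t) = a · g(t) · log(g(t)) for all t ∈ ℝ, g(t) ≥ c for all t for some constant c > 0, and g is of polynomial growth in time, i.e. there exist C > 0 and N ∈ ℕ with |g(t)| ≤ C(1 + |t|)^N for all t ∈ ℝ. Then g(t) = 1 for all t ∈ ℝ. -/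
/-- ODE content of the second part of Corollary 1.2(2) of the paper: for `a < 0`, a
differentiable solution of `g' = a g log g` on ℝ which is bounded below by a positive
constant and of polynomial growth in time must be identically 1. -/
theorem solution_identically_one (a : ℝ) (ha : a < 0) (g : ℝ → ℝ)
    (hg : Differentiable ℝ g)
    (hode : ∀ t : ℝ, deriv g t = a * g t * Real.log (g t))
    (hlow : ∃ c : ℝ, 0 < c ∧ ∀ t : ℝ, c ≤ g t)
    (hgrowth : ∃ C : ℝ, 0 < C ∧ ∃ N : ℕ, ∀ t : ℝ, |g t| ≤ C * (1 + |t|) ^ N) :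
    ∀ t : ℝ, g t = 1 := by
  obtain ⟨c, hc, hlow⟩ := hlow
  obtain ⟨C, hC, N, hgrowth⟩ := hgrowth
  have hgpos : ∀ t, 0 < g t := fun t => lt_of_lt_of_le hc (hlow t)
  set d := Real.log (g 0) with hd
  -- the function log (g t) * exp (-a t) is constant
  have hf : ∀ t : ℝ, HasDerivAt (fun s => Real.log (g s) * Real.exp (-a * s)) 0 t := by
    intro t
    have h1 : HasDerivAt g (a * g t * Real.log (g t)) t := by
      simpa [hode t] using (hg t).hasDerivAt
    have h2 : HasDerivAt (fun s => Real.log (g s)) (a * Real.log (g t)) t := by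
      have := h1.log (ne_of_gt (hgpos t))
      have hne : g t ≠ 0 := ne_of_gt (hgpos t)
      have : (a * g t * Real.log (g t)) / g t = a * Real.log (g t) := by
        field_simp
      simpa [this] using h1.log hne
    have h3 : HasDerivAt (fun s : ℝ => Real.exp (-a * s)) (-a * Real.exp (-a * t)) t := by
      simpa [mul_comm] using ((hasDerivAt_id t).const_mul (-a)).exp
    have : HasDerivAt (fun s => Real.log (g s) * Real.exp (-a * s)) _ t := h2.mul h3
    convert this using 1
    ring
  have hdiff : Differentiable ℝ (fun s => Real.log (g s) * Real.exp (-a * s)) :=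
    fun t => (hf t).differentiableAt
  have hconst : ∀ t : ℝ, Real.log (g t) * Real.exp (-a * t) = d := by
    intro t
    have := is_const_of_deriv_eq_zero hdiff (fun t => (hf t).deriv) t 0
    simpa [hd] using this
  have key : ∀ t : ℝ, Real.log (g t) = d * Real.exp (a * t) := by
    intro t
    have h := hconst t
    have he : Real.exp (-a * t) * Real.exp (a * t) = 1 := by
      rw [← Real.exp_add]; simp
    calc Real.log (g t) = Real.log (g t) * (Real.exp (-a * t) * Real.exp (a * t)) := by
          rw [he, mul_one]
      _ = (Real.log (g t) * Real.exp (-a * t)) * Real.exp (a * t) := by ring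
      _ = d * Real.exp (a * t) := by rw [h]
  -- now case on d
  rcases lt_trichotomy d 0 with hdlt | hdeq | hdgt
  · -- d < 0 contradicts the lower bound
    exfalso
    set x := max 1 (Real.log c / d + 1) with hx
    have hx1 : (1 : ℝ) ≤ x := le_max_left _ _
    have hxgt : Real.log c / d < x := lt_of_lt_of_le (lt_add_one _) (le_max_right _ _)
    have hxpos : 0 < x := lt_of_lt_of_le one_pos hx1
    set t := Real.log x / a with ht
    have hat : a * t = Real.log x := by
      rw [ht, mul_div_assoc']
      exact mul_div_cancel_left₀ _ (ne_of_lt ha)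
    have hexp : Real.exp (a * t) = x := by rw [hat, Real.exp_log hxpos]
    have h1 : Real.log c ≤ Real.log (g t) := Real.log_le_log hc (hlow t)
    rw [key t, hexp] at h1
    have h2 : d * x < d * (Real.log c / d) := by
      exact mul_lt_mul_of_neg_left hxgt hdlt
    rw [mul_div_cancel₀ _ (ne_of_lt hdlt)] at h2
    linarith
  · -- d = 0 : g ≡ 1
    intro t
    have : Real.log (g t) = 0 := by rw [key t, hdeq, zero_mul]
    have := Real.exp_log (hgpos t)
    rw [‹Real.log (g t) = 0›] at this
    simpa using this.symm
  · -- d > 0 contradicts polynomial growth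
    exfalso
    set b := -a with hb
    have hbpos : 0 < b := by simpa [hb] using neg_pos.mpr ha
    -- bound: for all s ≥ 0, d * exp (b * s) ≤ log C + N * s
    have hbound : ∀ s : ℝ, 0 ≤ s → d * Real.exp (b * s) ≤ Real.log C + N * s := by
      intro s hs
      have h1 : g (-s) ≤ C * (1 + |(-s : ℝ)|) ^ N := by
        have := hgrowth (-s)
        calc g (-s) ≤ |g (-s)| := le_abs_self _
          _ ≤ _ := this
      have habs : |(-s : ℝ)| = s := by rw [abs_neg, abs_of_nonneg hs]
      rw [habs] at h1
      have h1s : 0 < 1 + s := by linarith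
      have hlog : Real.log (g (-s)) ≤ Real.log (C * (1 + s) ^ N) :=
        Real.log_le_log (hgpos _) h1
      rw [Real.log_mul (ne_of_gt hC) (ne_of_gt (pow_pos h1s N)), Real.log_pow] at hlog
      have hlog1s : Real.log (1 + s) ≤ s := by
        have := Real.log_le_sub_one_of_pos h1s
        linarith
      have h2 : Real.log (g (-s)) ≤ Real.log C + N * s := by
        have hN : (N : ℝ) * Real.log (1 + s) ≤ N * s :=
          mul_le_mul_of_nonneg_left hlog1s (Nat.cast_nonneg N)
        linarith
      have h3 : Real.log (g (-s)) = d * Real.exp (b * s) := by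
        rw [key (-s)]
        congr 1
        rw [hb]; ring_nf
      linarith [h2, h3.symm.le.trans h2]
    -- quadratic lower bound for exp
    have hquad : ∀ s : ℝ, 0 ≤ s → b ^ 2 * s ^ 2 / 4 ≤ Real.exp (b * s) := by
      intro s hs
      have h1 : b * s / 2 + 1 ≤ Real.exp (b * s / 2) := Real.add_one_le_exp _
      have h2 : Real.exp (b * s) = Real.exp (b * s / 2) * Real.exp (b * s / 2) := by
        rw [← Real.exp_add]; ring_nf
      have hbs : 0 ≤ b * s / 2 := by positivity
      nlinarith [Real.exp_pos (b * s / 2)]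
    -- choose a large s to get a contradiction
    set M := (N : ℝ) + |Real.log C| + 1 with hM
    have hMpos : 0 < M := by positivity
    set s := max 1 (4 * M / (d * b ^ 2)) with hs
    have hs1 : (1 : ℝ) ≤ s := le_max_left _ _
    have hs2 : 4 * M / (d * b ^ 2) ≤ s := le_max_right _ _
    have hspos : 0 < s := lt_of_lt_of_le one_pos hs1
    have hdb : 0 < d * b ^ 2 := by positivity
    have h4 : 4 * M ≤ d * b ^ 2 * s := by
      rw [div_le_iff₀ hdb] at hs2; linarith
    have hb1 := hbound s (le_of_lt hspos)
    have hq := hquad s (le_of_lt hspos)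
    have h5 : d * (b ^ 2 * s ^ 2 / 4) ≤ d * Real.exp (b * s) :=
      mul_le_mul_of_nonneg_left hq (le_of_lt hdgt)
    have hlogC : Real.log C ≤ |Real.log C| := le_abs_self _
    clear_value d b M s
    have hMs : M * s = (N : ℝ) * s + |Real.log C| * s + s := by rw [hM]; ring
    have hint1 : 0 ≤ (d * b ^ 2 * s - 4 * M) * s :=
      mul_nonneg (sub_nonneg.mpr h4) hspos.le
    have hint1' : 4 * (M * s) ≤ d * (b ^ 2 * s ^ 2 / 4) * 4 := by nlinarith [hint1]
    have hint2 : 0 ≤ (s - 1) * (|Real.log C| + 1) :=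
      mul_nonneg (sub_nonneg.mpr hs1) (by positivity)
    nlinarith [h5, hb1, hMs, hint1', hint2, hlogC]
end

section
/- Let p and q be real numbers with p > q ≥ 1, let F : (0,∞) → ℝ be given by F(s) = s^q − s^p, and let c be a real number with c > (q−1)/(p−1). Then for every u > 0 and ε ∈ (0,1), the quantity H := (ε−1)F(u)/u + F'(u) satisfies H = u^{q−1}(q+ε−1) − u^{p−1}(p+ε−1); moreover there exists ε₀ ∈ (0,1) such that for all ε ∈ (0,ε₀) and all u > 0 with u^{p−q} ≥ c, one has H ≤ 0. -/
/-!
Since `u ^ q / u = u ^ (q - 1)`, `H` is `u ^ (q - 1) * ((q + ε - 1) - u ^ (p - q) * (p + ε - 1))`.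
As `ε → 0⁺`, `(q + ε - 1) / (p + ε - 1) → (q - 1) / (p - 1) < c`, so for small `ε` we get
`q + ε - 1 < c * (p + ε - 1) ≤ u ^ (p - q) * (p + ε - 1)` whenever `u ^ (p - q) ≥ c`.
-/

open Filter Topology Set

/-- The quantity `H` of the gradient estimate in Theorem 1.1 of the paper. -/
noncomputable def gradientH (F : ℝ → ℝ) (ε u : ℝ) : ℝ := (ε - 1) * F u / u + deriv F u

theorem hasDerivAt_rpow_sub_rpow {p q u : ℝ} (hu : 0 < u) :
    HasDerivAt (fun s : ℝ => s ^ q - s ^ p) (q * u ^ (q - 1) - p * u ^ (p - 1)) u :=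
  (Real.hasDerivAt_rpow_const (Or.inl hu.ne')).sub (Real.hasDerivAt_rpow_const (Or.inl hu.ne'))

theorem gradientH_rpow_sub_rpow (p q ε : ℝ) {u : ℝ} (hu : 0 < u) :
    gradientH (fun s => s ^ q - s ^ p) ε u
      = u ^ (q - 1) * (q + ε - 1) - u ^ (p - 1) * (p + ε - 1) := by
  rw [gradientH, (hasDerivAt_rpow_sub_rpow hu).deriv, Real.rpow_sub_one hu.ne',
    Real.rpow_sub_one hu.ne']
  ring

theorem eventually_add_sub_one_lt_mul {p q c : ℝ} (hp : 1 < p) (hc : (q - 1) / (p - 1) < c) :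
    ∀ᶠ ε in 𝓝[>] 0, q + ε - 1 < c * (p + ε - 1) := by
  have hlim : Tendsto (fun ε => (q + ε - 1) / (p + ε - 1)) (𝓝 0) (𝓝 ((q - 1) / (p - 1))) := by
    have hcont : ContinuousAt (fun ε => (q + ε - 1) / (p + ε - 1)) 0 :=
      (by fun_prop : ContinuousAt (fun ε : ℝ => q + ε - 1) 0).div (by fun_prop) (by linarith)
    simpa using hcont.tendsto
  have hpos : ∀ᶠ ε in 𝓝[>] (0 : ℝ), 0 < p + ε - 1 := by
    filter_upwards [self_mem_nhdsWithin] with ε hε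
    linarith [mem_Ioi.mp hε]
  filter_upwards [nhdsWithin_le_nhds (hlim.eventually (gt_mem_nhds hc)), hpos] with ε hlt hε
  exact (div_lt_iff₀ hε).mp hlt

theorem rpow_mul_sub_rpow_mul_nonpos {p q a b c u : ℝ} (hu : 0 < u) (hb : 0 ≤ b)
    (hab : a ≤ c * b) (hcu : c ≤ u ^ (p - q)) :
    u ^ (q - 1) * a - u ^ (p - 1) * b ≤ 0 := by
  have hsplit : u ^ (p - 1) = u ^ (q - 1) * u ^ (p - q) := by
    rw [← Real.rpow_add hu]
    ring_nf
  rw [hsplit, sub_nonpos, mul_assoc]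
  gcongr
  exact hab.trans (mul_le_mul_of_nonneg_right hcu hb)

/-- The computation in the final Corollary of Section 3 of the paper: for
`F(u) = u^q − u^p` with `p > q ≥ 1`, the quantity `H = (ε−1)F(u)/u + F'(u)` equals
`u^{q−1}(q+ε−1) − u^{p−1}(p+ε−1)` for `u > 0`, and if `c > (q−1)/(p−1)` then `H ≤ 0`
for all sufficiently small `ε ∈ (0,1)` and all `u > 0` with `u^{p−q} ≥ c`. -/
theorem power_nonlinearity_H_computation (p q c : ℝ) (hq : 1 ≤ q) (hpq : q < p)
    (hc : c > (q - 1) / (p - 1)) (F : ℝ → ℝ) (hF : F = fun s => s ^ q - s ^ p) :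
    (∀ ε ∈ Set.Ioo (0:ℝ) 1, ∀ u : ℝ, 0 < u →
      (ε - 1) * F u / u + deriv F u
        = u ^ (q - 1) * (q + ε - 1) - u ^ (p - 1) * (p + ε - 1)) ∧
    (∃ ε₀ ∈ Set.Ioo (0:ℝ) 1, ∀ ε ∈ Set.Ioo (0:ℝ) ε₀, ∀ u : ℝ, 0 < u →
      u ^ (p - q) ≥ c → (ε - 1) * F u / u + deriv F u ≤ 0) := by
  subst hF
  have hp : 1 < p := hq.trans_lt hpq
  refine ⟨fun ε _ u hu => gradientH_rpow_sub_rpow p q ε hu, ?_⟩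
  obtain ⟨ε₀, ⟨hε₀, hε₀_le⟩, hsmall⟩ :=
    (mem_nhdsGT_iff_exists_mem_Ioc_Ioo_subset one_half_pos).mp
      (eventually_add_sub_one_lt_mul hp hc)
  refine ⟨ε₀, ⟨hε₀, by linarith⟩, fun ε hε u hu hcu => ?_⟩
  change gradientH (fun s => s ^ q - s ^ p) ε u ≤ 0
  rw [gradientH_rpow_sub_rpow p q ε hu]
  exact rpow_mul_sub_rpow_mul_nonpos hu (by linarith [hε.1]) (hsmall hε).le hcu
end

section
/- Let u : EuclideanSpace ℝ (Fin n) → ℝ be a smooth function satisfying the Allen–Cahn equation Δu − u³ + u = 0 on all of EuclideanSpace ℝ (Fin n). If there exists m > 0 such that u(x)² ≥ m² for all x, and u is of polynomial growth (there exist C > 0 and N ∈ ℕ with |u(x)| ≤ C(1+‖x‖)^N for all x), then u is constant. -/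
open Real Filter Set Topology ContDiff

/-- The Euclidean Laplacian, as the trace of the second derivative. -/
noncomputable def eLap {n : ℕ} (v : EuclideanSpace ℝ (Fin n) → ℝ)
    (x : EuclideanSpace ℝ (Fin n)) : ℝ :=
  ∑ i : Fin n, fderiv ℝ (fun y => fderiv ℝ v y (EuclideanSpace.single i 1)) x
    (EuclideanSpace.single i 1)

/-- The weighted (drifted) Laplacian `Δ_f v = Δv − ⟨∇f, ∇v⟩`. -/
noncomputable def eLapF {n : ℕ} (f v : EuclideanSpace ℝ (Fin n) → ℝ)
    (x : EuclideanSpace ℝ (Fin n)) : ℝ :=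
  eLap v x - (inner ℝ (gradient f x) (gradient v x) : ℝ)

namespace AllenCahnAux

variable {n : ℕ}
local notation "E" => EuclideanSpace ℝ (Fin n)

lemma diff_fderiv_apply {f : E → ℝ} (hf : ContDiff ℝ ∞ f) (e : E) :
    ContDiff ℝ ∞ (fun y : E => fderiv ℝ f y e) :=
  (hf.fderiv_right (by simp)).clm_apply contDiff_const

lemma line_deriv {f : E → ℝ} (hf : ContDiff ℝ ∞ f) (x e : E) (t : ℝ) :
    deriv (fun s : ℝ => f (x + s • e)) t = fderiv ℝ f (x + t • e) e := by
  have h1 : HasDerivAt (fun s : ℝ => x + s • e) e t := by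
    simpa using ((hasDerivAt_id t).smul_const e).const_add x
  exact ((hf.differentiable (by simp)).differentiableAt.hasFDerivAt.comp_hasDerivAt t h1).deriv

lemma line_deriv2 {f : E → ℝ} (hf : ContDiff ℝ ∞ f) (x e : E) :
    deriv (deriv (fun s : ℝ => f (x + s • e))) 0
      = fderiv ℝ (fun y => fderiv ℝ f y e) x e := by
  have h0 : deriv (fun s : ℝ => f (x + s • e))
      = fun s : ℝ => (fun y => fderiv ℝ f y e) (x + s • e) :=
    funext fun t => line_deriv hf x e t
  rw [h0]
  simpa using line_deriv (diff_fderiv_apply hf e) x e 0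

lemma second_test (φ : ℝ → ℝ) (hφ : ContDiff ℝ ∞ φ) (hmax : ∀ t, φ t ≤ φ 0) :
    deriv (deriv φ) 0 ≤ 0 := by
  by_contra h
  push_neg at h
  set ψ := deriv φ with hψdef
  have hψcd : ContDiff ℝ ∞ ψ := (contDiff_infty_iff_deriv.mp hφ).2
  have hψ0 : ψ 0 = 0 := IsLocalMax.deriv_eq_zero (Filter.Eventually.of_forall hmax)
  have hd : HasDerivAt ψ (deriv ψ 0) 0 :=
    ((hψcd.differentiable (by simp)) 0).hasDerivAt
  have hslope : Tendsto (slope ψ 0) (𝓝[≠] 0) (𝓝 (deriv ψ 0)) :=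
    hasDerivAt_iff_tendsto_slope.mp hd
  have hev : ∀ᶠ t in 𝓝[≠] (0:ℝ), 0 < slope ψ 0 t :=
    hslope.eventually (eventually_gt_nhds h)
  have hev' : ∀ᶠ t in 𝓝[>] (0:ℝ), 0 < slope ψ 0 t :=
    hev.filter_mono (nhdsWithin_mono 0 (fun t ht => ne_of_gt ht))
  obtain ⟨δ, hδ0, hδ⟩ := (mem_nhdsGT_iff_exists_Ioc_subset).mp hev'
  have hpos : ∀ t ∈ Set.Ioo (0:ℝ) δ, 0 < ψ t := by
    intro t ht
    have h1 : 0 < slope ψ 0 t := hδ ⟨ht.1, ht.2.le⟩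
    rw [slope_def_field, hψ0] at h1
    have : 0 < ψ t / t := by simpa [div_eq_iff] using h1
    exact (div_pos_iff.mp this).resolve_right
      (fun ⟨_, h2⟩ => absurd ht.1 (not_lt.mpr h2.le)) |>.1
  have hsm : StrictMonoOn φ (Set.Icc 0 δ) := by
    apply strictMonoOn_of_deriv_pos (convex_Icc 0 δ) (hφ.continuous.continuousOn)
    intro t ht
    rw [interior_Icc] at ht
    exact hpos t ht
  have := hsm (Set.left_mem_Icc.mpr hδ0.le) (Set.right_mem_Icc.mpr hδ0.le) hδ0
  exact absurd (hmax δ) (not_le.mpr this)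

lemma eLap_nonpos_at_max {g : E → ℝ} (hg : ContDiff ℝ ∞ g) (x₀ : E)
    (hmax : ∀ x, g x ≤ g x₀) : eLap g x₀ ≤ 0 := by
  apply Finset.sum_nonpos
  intro i _
  rw [← line_deriv2 hg x₀ (EuclideanSpace.single i 1)]
  apply second_test
  · exact hg.comp (by
      apply ContDiff.add contDiff_const
      exact (contDiff_id.smul contDiff_const))
  · intro t
    simpa using hmax (x₀ + t • EuclideanSpace.single i 1)

lemma eLap_aux {f g : E → ℝ} (hf : ContDiff ℝ ∞ f) (hg : ContDiff ℝ ∞ g)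
    (A B C : ℝ) (x : E) :
    eLap (fun y => A * f y + B * g y + C) x = A * eLap f x + B * eLap g x := by
  have hdf := hf.differentiable (by simp)
  have hdg := hg.differentiable (by simp)
  have h1 : ∀ (e : E) (y : E), fderiv ℝ (fun z => A * f z + B * g z + C) y e
      = A * fderiv ℝ f y e + B * fderiv ℝ g y e := by
    intro e y
    have : fderiv ℝ (fun z => A * f z + B * g z + C) y
        = A • fderiv ℝ f y + B • fderiv ℝ g y := by
      rw [fderiv_add_const]
      rw [fderiv_fun_add ((hdf y).const_mul A) ((hdg y).const_mul B),
        fderiv_const_mul (hdf y), fderiv_const_mul (hdg y)]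
    rw [this]; simp
  unfold eLap
  rw [Finset.mul_sum, Finset.mul_sum, ← Finset.sum_add_distrib]
  apply Finset.sum_congr rfl
  intro i _
  set e := EuclideanSpace.single i (1:ℝ)
  have h2 : (fun y => fderiv ℝ (fun z => A * f z + B * g z + C) y e)
      = fun y => A * fderiv ℝ f y e + B * fderiv ℝ g y e := funext fun y => h1 e y
  rw [h2]
  have hdf2 : DifferentiableAt ℝ (fun y : E => fderiv ℝ f y e) x :=
    ((diff_fderiv_apply hf e).differentiable (by simp)) x
  have hdg2 : DifferentiableAt ℝ (fun y : E => fderiv ℝ g y e) x :=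
    ((diff_fderiv_apply hg e).differentiable (by simp)) x
  rw [fderiv_fun_add (hdf2.const_mul A) (hdg2.const_mul B), fderiv_const_mul hdf2,
    fderiv_const_mul hdg2]
  simp

noncomputable def barrier (a : ℝ) (x : EuclideanSpace ℝ (Fin n)) : ℝ :=
  ∑ i : Fin n, Real.cosh (a * x i)

lemma barrier_contDiff (a : ℝ) : ContDiff ℝ ∞ (barrier (n := n) a) := by
  apply ContDiff.sum
  intro i _
  exact Real.contDiff_cosh.comp (contDiff_const.mul (by exact (EuclideanSpace.proj (𝕜 := ℝ) i : E →L[ℝ] ℝ).contDiff))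

lemma scalar_hasDerivAt (a s : ℝ) :
    HasDerivAt (fun t : ℝ => Real.cosh (a * t)) (a * Real.sinh (a * s)) s := by
  have := (Real.hasDerivAt_cosh (a * s)).comp s ((hasDerivAt_id s).const_mul a)
  simpa [mul_comm, Function.comp_def] using this

lemma scalar_hasDerivAt' (c a s : ℝ) :
    HasDerivAt (fun t : ℝ => c * Real.sinh (a * t)) (c * (a * Real.cosh (a * s))) s := by
  have := ((Real.hasDerivAt_sinh (a * s)).comp s ((hasDerivAt_id s).const_mul a)).const_mul c
  simpa [mul_comm, mul_assoc, mul_left_comm] using this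

lemma barrier_hasFDerivAt (a : ℝ) (x : E) :
    HasFDerivAt (barrier a)
      (∑ i : Fin n, (a * Real.sinh (a * x i)) • (EuclideanSpace.proj i : _ →L[ℝ] ℝ)) x := by
  apply HasFDerivAt.fun_sum
  intro i _
  have h := (scalar_hasDerivAt a (x i)).comp_hasFDerivAt x
    ((EuclideanSpace.proj i : _ →L[ℝ] ℝ).hasFDerivAt (x := x))
  simpa [Function.comp_def] using h

lemma barrier_fderiv_apply (a : ℝ) (x : E) (j : Fin n) :
    fderiv ℝ (barrier a) x (EuclideanSpace.single j 1) = a * Real.sinh (a * x j) := by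
  rw [(barrier_hasFDerivAt a x).fderiv]
  rw [ContinuousLinearMap.sum_apply]
  have : ∀ i : Fin n, ((a * Real.sinh (a * x i)) • (EuclideanSpace.proj i : _ →L[ℝ] ℝ))
      (EuclideanSpace.single j 1) = if i = j then a * Real.sinh (a * x i) else 0 := by
    intro i
    simp [EuclideanSpace.single_apply, eq_comm]
  simp only [this]
  simp

lemma barrier_eLap (a : ℝ) (x : E) : eLap (barrier a) x = a ^ 2 * barrier a x := by
  unfold eLap
  have h1 : ∀ j : Fin n, (fun y : E => fderiv ℝ (barrier a) y (EuclideanSpace.single j 1))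
      = fun y : E => a * Real.sinh (a * y j) := by
    intro j; exact funext fun y => barrier_fderiv_apply a y j
  have h2 : ∀ j : Fin n, fderiv ℝ (fun y : E => a * Real.sinh (a * y j)) x
      (EuclideanSpace.single j 1) = a * (a * Real.cosh (a * x j)) := by
    intro j
    have hF : HasFDerivAt (fun y : E => a * Real.sinh (a * y j))
        ((a * (a * Real.cosh (a * x j))) • (EuclideanSpace.proj j : _ →L[ℝ] ℝ)) x := by
      have h := (scalar_hasDerivAt' a a (x j)).comp_hasFDerivAt x
        ((EuclideanSpace.proj j : _ →L[ℝ] ℝ).hasFDerivAt (x := x))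
      simpa [Function.comp_def] using h
    rw [hF.fderiv]
    simp [EuclideanSpace.single_apply]
  calc ∑ j : Fin n, fderiv ℝ (fun y : E => fderiv ℝ (barrier a) y (EuclideanSpace.single j 1)) x
        (EuclideanSpace.single j 1)
      = ∑ j : Fin n, a * (a * Real.cosh (a * x j)) := by
        apply Finset.sum_congr rfl; intro j _; rw [h1 j, h2 j]
    _ = a ^ 2 * barrier a x := by
        unfold barrier; rw [Finset.mul_sum]; apply Finset.sum_congr rfl; intro j _; ring

lemma barrier_lower (hn : 0 < n) (a : ℝ) (ha : 0 ≤ a) (m : ℕ) (x : E) :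
    (a / Real.sqrt n) ^ m * ‖x‖ ^ m / (m.factorial * 2) ≤ barrier a x := by
  obtain ⟨i₀, -, hmax⟩ := Finset.exists_max_image Finset.univ (fun i : Fin n => |x i|)
    ⟨⟨0, hn⟩, Finset.mem_univ _⟩
  have hsn : (0:ℝ) < Real.sqrt n := Real.sqrt_pos.mpr (by exact_mod_cast hn)
  have hnorm : ‖x‖ ≤ Real.sqrt n * |x i₀| := by
    rw [EuclideanSpace.norm_eq]
    have h1 : ∑ i : Fin n, ‖x i‖ ^ 2 ≤ (n : ℝ) * |x i₀| ^ 2 := by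
      calc ∑ i : Fin n, ‖x i‖ ^ 2 ≤ ∑ _i : Fin n, |x i₀| ^ 2 := by
            apply Finset.sum_le_sum
            intro i _
            have := hmax i (Finset.mem_univ i)
            rw [Real.norm_eq_abs]
            exact pow_le_pow_left₀ (abs_nonneg _) this 2
        _ = (n : ℝ) * |x i₀| ^ 2 := by simp [mul_comm]
    calc Real.sqrt (∑ i : Fin n, ‖x i‖ ^ 2) ≤ Real.sqrt ((n : ℝ) * |x i₀| ^ 2) :=
          Real.sqrt_le_sqrt h1
      _ = Real.sqrt n * |x i₀| := by
          rw [Real.sqrt_mul (by positivity), Real.sqrt_sq_eq_abs, abs_abs]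
  have key : (a / Real.sqrt n) ^ m * ‖x‖ ^ m ≤ (a * |x i₀|) ^ m := by
    rw [← mul_pow]
    apply pow_le_pow_left₀ (by positivity)
    calc a / Real.sqrt n * ‖x‖ ≤ a / Real.sqrt n * (Real.sqrt n * |x i₀|) := by
          apply mul_le_mul_of_nonneg_left hnorm (by positivity)
      _ = a * |x i₀| := by field_simp
  have hexp : (a * |x i₀|) ^ m / m.factorial ≤ Real.exp (a * |x i₀|) := by
    have h2 := Real.sum_le_exp_of_nonneg (by positivity : (0:ℝ) ≤ a * |x i₀|) (m + 1)
    refine le_trans ?_ h2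
    exact Finset.single_le_sum (f := fun i => (a * |x i₀|) ^ i / i.factorial)
      (fun i _ => by positivity) (Finset.self_mem_range_succ m)
  have hcosh : Real.exp (a * |x i₀|) ≤ 2 * Real.cosh (a * x i₀) := by
    have h3 : Real.cosh (a * x i₀) = Real.cosh (a * |x i₀|) := by
      rw [← Real.cosh_abs, ← Real.cosh_abs (a * |x i₀|), abs_mul, abs_mul, abs_abs,
        abs_of_nonneg ha]
    rw [h3, Real.cosh_eq]
    have := Real.exp_pos (-(a * |x i₀|))
    linarith
  have hbar : Real.cosh (a * x i₀) ≤ barrier a x :=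
    Finset.single_le_sum (f := fun i => Real.cosh (a * x i))
      (fun i _ => (Real.cosh_pos _).le) (Finset.mem_univ i₀)
  have hfac : (0:ℝ) < m.factorial := by exact_mod_cast m.factorial_pos
  rw [div_le_iff₀ (by positivity)]
  calc (a / Real.sqrt n) ^ m * ‖x‖ ^ m ≤ (a * |x i₀|) ^ m := key
    _ ≤ Real.exp (a * |x i₀|) * m.factorial := by
        rw [div_le_iff₀ hfac] at hexp; linarith
    _ ≤ (2 * Real.cosh (a * x i₀)) * m.factorial := by
        apply mul_le_mul_of_nonneg_right hcosh hfac.le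
    _ ≤ barrier a x * (m.factorial * 2) := by nlinarith [hbar, hfac]

lemma barrier_pos (hn : 0 < n) (a : ℝ) (x : E) : 0 < barrier a x :=
  Finset.sum_pos (fun i _ => Real.cosh_pos _) ⟨⟨0, hn⟩, Finset.mem_univ _⟩

/-- Core comparison lemma: a subsolution of `Δw ≥ c w` on its positivity set
with polynomial growth is nonpositive. -/
lemma core (hn : 0 < n) (w : E → ℝ) (hw : ContDiff ℝ ∞ w) (c : ℝ) (hc : 0 < c)
    (hsub : ∀ x, 0 < w x → c * w x ≤ eLap w x)
    (C : ℝ) (hC : 0 < C) (N : ℕ) (hgr : ∀ x, w x ≤ C * (1 + ‖x‖) ^ N) :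
    ∀ x, w x ≤ 0 := by
  by_contra hcon
  push_neg at hcon
  obtain ⟨x₁, hx₁⟩ := hcon
  set a := Real.sqrt c with hadef
  have ha0 : 0 < a := Real.sqrt_pos.mpr hc
  have ha2 : a ^ 2 = c := Real.sq_sqrt hc.le
  have hsn : (0:ℝ) < Real.sqrt n := Real.sqrt_pos.mpr (by exact_mod_cast hn)
  have hbpos : ∀ x : E, 0 < barrier a x := barrier_pos hn a
  set ε := w x₁ / (2 * barrier a x₁) with hεdef
  have hε : 0 < ε := div_pos hx₁ (by have := hbpos x₁; linarith)
  set g : E → ℝ := fun y => w y - ε * barrier a y with hgdef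
  have hgx₁ : 0 < g x₁ := by
    have h0 : ε * barrier a x₁ = w x₁ / 2 := by
      rw [hεdef]; field_simp; rw [div_eq_iff (ne_of_gt (by have := hbpos x₁; linarith))]; ring
    have : g x₁ = w x₁ - ε * barrier a x₁ := rfl
    rw [this, h0]; linarith
  set b := ε * ((a / Real.sqrt n) ^ (N + 1) / ((N + 1).factorial * 2)) with hbdef
  have hfacpos : (0:ℝ) < (N + 1).factorial := by exact_mod_cast (N + 1).factorial_pos
  have hb : 0 < b := by
    apply mul_pos hε
    apply div_pos (pow_pos (div_pos ha0 hsn) _) (by positivity)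
  have hgb : ∀ x : E, g x ≤ C * (1 + ‖x‖) ^ N - b * ‖x‖ ^ (N + 1) := by
    intro x
    have h1 := barrier_lower hn a ha0.le (N + 1) x
    have h2 : ε * ((a / Real.sqrt n) ^ (N + 1) * ‖x‖ ^ (N + 1) / ((N + 1).factorial * 2))
        ≤ ε * barrier a x := mul_le_mul_of_nonneg_left h1 hε.le
    have h3 : b * ‖x‖ ^ (N + 1)
        = ε * ((a / Real.sqrt n) ^ (N + 1) * ‖x‖ ^ (N + 1) / ((N + 1).factorial * 2)) := by
      rw [hbdef]; ring
    have h4 := hgr x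
    have : g x = w x - ε * barrier a x := rfl
    rw [this, h3]
    linarith
  set R := max (max 1 ‖x₁‖) ((C * 2 ^ N + |g x₁| + 1) / b) with hRdef
  have hR1 : (1:ℝ) ≤ R := le_trans (le_max_left _ _) (le_max_left _ _)
  have hRx₁ : ‖x₁‖ ≤ R := le_trans (le_max_right _ _) (le_max_left _ _)
  have hRb : C * 2 ^ N + |g x₁| + 1 ≤ b * R := by
    have := le_max_right (max 1 ‖x₁‖) ((C * 2 ^ N + |g x₁| + 1) / b)
    rw [div_le_iff₀ hb] at this
    linarith [this]
  have hout : ∀ x : E, R ≤ ‖x‖ → g x ≤ g x₁ - 1 := by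
    intro x hx
    have hr1 : 1 ≤ ‖x‖ := le_trans hR1 hx
    have h2 : (1 + ‖x‖) ^ N ≤ 2 ^ N * ‖x‖ ^ N := by
      calc (1 + ‖x‖) ^ N ≤ (2 * ‖x‖) ^ N :=
            pow_le_pow_left₀ (by positivity) (by linarith) N
        _ = 2 ^ N * ‖x‖ ^ N := mul_pow _ _ _
    have h3 : C * 2 ^ N + |g x₁| + 1 ≤ b * ‖x‖ :=
      le_trans hRb (mul_le_mul_of_nonneg_left hx hb.le)
    have h4 : g x ≤ C * (2 ^ N * ‖x‖ ^ N) - b * ‖x‖ ^ (N + 1) := by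
      have h5 := hgb x
      have h6 : C * (1 + ‖x‖) ^ N ≤ C * (2 ^ N * ‖x‖ ^ N) :=
        mul_le_mul_of_nonneg_left h2 hC.le
      linarith
    have h7 : C * (2 ^ N * ‖x‖ ^ N) - b * ‖x‖ ^ (N + 1)
        = ‖x‖ ^ N * (C * 2 ^ N - b * ‖x‖) := by ring
    have h8 : C * 2 ^ N - b * ‖x‖ ≤ -(|g x₁| + 1) := by linarith
    have h9 : 1 ≤ ‖x‖ ^ N := one_le_pow₀ hr1
    have h10 : ‖x‖ ^ N * (C * 2 ^ N - b * ‖x‖) ≤ 1 * (C * 2 ^ N - b * ‖x‖) := by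
      apply mul_le_mul_of_nonpos_right h9 (by have := abs_nonneg (g x₁); linarith)
    have h11 := neg_abs_le (g x₁)
    rw [h7] at h4
    linarith
  have hgc : Continuous g :=
    (hw.continuous).sub (continuous_const.mul (barrier_contDiff a).continuous)
  have hx₁mem : x₁ ∈ Metric.closedBall (0:E) R := by
    simpa [Metric.mem_closedBall, dist_zero_right] using hRx₁
  obtain ⟨x₀, hx₀mem, hx₀max⟩ := (isCompact_closedBall (0:E) R).exists_isMaxOn
    ⟨x₁, hx₁mem⟩ hgc.continuousOn
  have hmaxball := isMaxOn_iff.mp hx₀max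
  have hmax : ∀ x, g x ≤ g x₀ := by
    intro x
    by_cases hx : x ∈ Metric.closedBall (0:E) R
    · exact hmaxball x hx
    · have hxR : R ≤ ‖x‖ := by
        simp only [Metric.mem_closedBall, dist_zero_right, not_le] at hx
        linarith
      have h8 := hout x hxR
      have h9 : g x₁ ≤ g x₀ := hmaxball x₁ hx₁mem
      linarith
  have hg0 : 0 < g x₀ := lt_of_lt_of_le hgx₁ (hmaxball x₁ hx₁mem)
  have hw0 : 0 < w x₀ := by
    have h12 : g x₀ = w x₀ - ε * barrier a x₀ := rfl
    nlinarith [hbpos x₀, hε]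
  have hgs : ContDiff ℝ ∞ g := hw.sub (contDiff_const.mul (barrier_contDiff a))
  have hlap : eLap g x₀ ≤ 0 := eLap_nonpos_at_max hgs x₀ hmax
  have hlin : eLap g x₀ = eLap w x₀ - ε * eLap (barrier a) x₀ := by
    have hfun : g = fun y => 1 * w y + (-ε) * barrier a y + 0 := by
      funext y; simp [hgdef]; ring
    rw [hfun, eLap_aux hw (barrier_contDiff a) 1 (-ε) 0 x₀]; ring
  have hbl : eLap (barrier a) x₀ = c * barrier a x₀ := by rw [barrier_eLap, ha2]
  have hsb := hsub x₀ hw0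
  have h13 : g x₀ = w x₀ - ε * barrier a x₀ := rfl
  nlinarith [hbpos x₀, hg0, hε]

/-- Positive case: a solution with `u ≥ m > 0` and polynomial growth is identically 1. -/
lemma main_pos (hn : 0 < n) (u : E → ℝ) (hu : ContDiff ℝ ∞ u)
    (heq : ∀ x, eLap u x - u x ^ 3 + u x = 0)
    (m : ℝ) (hm0 : 0 < m) (hml : ∀ x, m ≤ u x)
    (C : ℝ) (hC : 0 < C) (N : ℕ) (hgr : ∀ x, |u x| ≤ C * (1 + ‖x‖) ^ N) :
    ∀ x, u x = 1 := by
  have hlapu : ∀ x, eLap u x = u x ^ 3 - u x := fun x => by linarith [heq x]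
  have ha : ∀ x : E, u x - 1 ≤ 0 := by
    set w₁ : E → ℝ := fun x => u x - 1 with hw₁def
    have hw₁s : ContDiff ℝ ∞ w₁ := hu.sub contDiff_const
    have he₁ : ∀ x, eLap w₁ x = eLap u x := by
      intro x
      have hfun : w₁ = fun y => 1 * u y + 0 * u y + (-1) := by
        funext y; show u y - 1 = _; ring
      rw [hfun, eLap_aux hu hu 1 0 (-1) x]; ring
    exact core hn w₁ hw₁s 2 (by norm_num)
      (fun x hx => by
        have hx' : 1 < u x := by
          have : w₁ x = u x - 1 := rfl
          linarith [hx]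
        rw [he₁, hlapu]
        have : w₁ x = u x - 1 := rfl
        rw [this]
        nlinarith [sq_nonneg (u x - 1), sq_nonneg (u x + 1)])
      C hC N
      (fun x => by
        have h1 := hgr x
        have h2 := le_abs_self (u x)
        have : w₁ x = u x - 1 := rfl
        linarith)
  have hb : ∀ x : E, 1 - u x ≤ 0 := by
    set w₂ : E → ℝ := fun x => 1 - u x with hw₂def
    have hw₂s : ContDiff ℝ ∞ w₂ := contDiff_const.sub hu
    have he₂ : ∀ x, eLap w₂ x = -eLap u x := by
      intro x
      have hfun : w₂ = fun y => (-1) * u y + 0 * u y + 1 := by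
        funext y; show 1 - u y = _; ring
      rw [hfun, eLap_aux hu hu (-1) 0 1 x]; ring
    exact core hn w₂ hw₂s m hm0
      (fun x hx => by
        have hx' : u x < 1 := by
          have : w₂ x = 1 - u x := rfl
          linarith [hx]
        have hu0 : 0 < u x := lt_of_lt_of_le hm0 (hml x)
        rw [he₂, hlapu]
        have : w₂ x = 1 - u x := rfl
        rw [this]
        nlinarith [hml x, sq_nonneg (u x)])
      (C + 1) (by linarith) N
      (fun x => by
        have h1 : (1:ℝ) ≤ (1 + ‖x‖) ^ N := one_le_pow₀ (by linarith [norm_nonneg x])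
        have h2 : w₂ x = 1 - u x := rfl
        have h3 := hml x
        nlinarith [h1, hC.le])
  intro x
  have := ha x
  have := hb x
  linarith

end AllenCahnAux

open AllenCahnAux in
/-- Theorem 1.2 of the paper on Euclidean space: a smooth solution of the Allen–Cahn
equation `Δu − u³ + u = 0` on ℝⁿ with `u² ≥ m² > 0` and of polynomial growth is constant. -/
theorem allen_cahn_liouville (n : ℕ) (u : EuclideanSpace ℝ (Fin n) → ℝ)
    (hu : ContDiff ℝ (⊤ : ℕ∞) u)
    (heq : ∀ x, eLap u x - u x ^ 3 + u x = 0)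
    (hm : ∃ m : ℝ, 0 < m ∧ ∀ x, u x ^ 2 ≥ m ^ 2)
    (hgrowth : ∃ C : ℝ, 0 < C ∧ ∃ N : ℕ, ∀ x, |u x| ≤ C * (1 + ‖x‖) ^ N) :
    ∀ x y, u x = u y := by
  intro x y
  rcases Nat.eq_zero_or_pos n with hn0 | hn
  · subst hn0
    haveI : Subsingleton (EuclideanSpace ℝ (Fin 0)) :=
      ⟨fun a b => PiLp.ext fun i => i.elim0⟩
    exact congrArg u (Subsingleton.elim x y)
  · obtain ⟨m, hm0, hm2⟩ := hm
    obtain ⟨C, hC, N, hgr⟩ := hgrowth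
    have hu' : ContDiff ℝ ∞ u := hu.of_le (by simp)
    have habs : ∀ z, m ≤ |u z| := by
      intro z
      nlinarith [hm2 z, abs_nonneg (u z), sq_abs (u z)]
    have hne : ∀ z, u z ≠ 0 := by
      intro z h
      have := habs z
      rw [h, abs_zero] at this
      linarith
    have key : ∀ z₁ z₂ : EuclideanSpace ℝ (Fin n), u z₁ < 0 → 0 < u z₂ → False := by
      intro z₁ z₂ h1 h2
      have hc : ContinuousOn (fun t : ℝ => u (z₁ + t • (z₂ - z₁))) (Set.Icc 0 1) :=
        (hu'.continuous.comp (by continuity)).continuousOn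
      have hIvt := intermediate_value_Icc (zero_le_one (α := ℝ)) hc
      have h0mem : (0:ℝ) ∈ Set.Icc (u (z₁ + (0:ℝ) • (z₂ - z₁))) (u (z₁ + (1:ℝ) • (z₂ - z₁))) := by
        simp only [zero_smul, add_zero, one_smul]
        constructor
        · simpa using h1.le
        · simp only [add_sub_cancel]
          exact h2.le
      obtain ⟨t, -, ht⟩ := hIvt h0mem
      exact hne _ ht
    rcases lt_or_gt_of_ne (hne x) with hneg | hpos
    · -- u < 0 everywhere; apply main_pos to -u
      have hallneg : ∀ z, u z < 0 := by
        intro z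
        rcases lt_or_gt_of_ne (hne z) with h | h
        · exact h
        · exact absurd (key x z hneg h) (fun h => h)
      set v : EuclideanSpace ℝ (Fin n) → ℝ := fun z => -u z with hvdef
      have hv : ContDiff ℝ ∞ v := hu'.neg
      have hveq : ∀ z, eLap v z - v z ^ 3 + v z = 0 := by
        intro z
        have hfun : v = fun y => (-1) * u y + 0 * u y + 0 := by
          funext y; show -u y = _; ring
        have hlv : eLap v z = -eLap u z := by
          rw [hfun, eLap_aux hu' hu' (-1) 0 0 z]; ring
        have : v z = -u z := rfl
        rw [hlv, this]
        have := heq z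
        ring_nf
        ring_nf at this
        linarith
      have hml : ∀ z, m ≤ v z := by
        intro z
        have h1 := habs z
        have : v z = -u z := rfl
        rw [this]
        rw [abs_of_neg (hallneg z)] at h1
        linarith
      have hgrv : ∀ z, |v z| ≤ C * (1 + ‖z‖) ^ N := by
        intro z
        have : v z = -u z := rfl
        rw [this, abs_neg]
        exact hgr z
      have h1 := main_pos hn v hv hveq m hm0 hml C hC N hgrv
      have hx1 := h1 x
      have hy1 := h1 y
      have : v x = -u x := rfl
      have : v y = -u y := rfl
      have hux : u x = -1 := by
        have : v x = -u x := rfl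
        rw [this] at hx1; linarith
      have huy : u y = -1 := by
        have : v y = -u y := rfl
        rw [this] at hy1; linarith
      rw [hux, huy]
    · -- u > 0 everywhere
      have hallpos : ∀ z, 0 < u z := by
        intro z
        rcases lt_or_gt_of_ne (hne z) with h | h
        · exact absurd (key z x h hpos) (fun h => h)
        · exact h
      have hml : ∀ z, m ≤ u z := by
        intro z
        have h1 := habs z
        rwa [abs_of_pos (hallpos z)] at h1
      have h1 := main_pos hn u hu' heq m hm0 hml C hC N hgr
      rw [h1 x, h1 y]
end

section
/- Let c > 0 and let u : EuclideanSpace ℝ (Fin n) → ℝ be a smooth function satisfying the Fisher equation Δu − c·u·(u−1) = 0 on all of EuclideanSpace ℝ (Fin n). If there exists m > 0 such that u(x) ≥ m for all x, and u is of polynomial growth (there exist C > 0 and N ∈ ℕ with |u(x)| ≤ C(1+‖x‖)^N for all x), then u is constant. -/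
open Real Filter

/-- Second derivative test: at an interior local max, the second derivative is ≤ 0. -/
lemma second_deriv_nonpos_at_localMax {h h' : ℝ → ℝ} {b : ℝ}
    (hd : ∀ t, HasDerivAt h (h' t) t) (hd2 : HasDerivAt h' b 0)
    (hmax : IsLocalMax h 0) : b ≤ 0 := by
  by_contra hb
  push_neg at hb
  have h'0 : h' 0 = 0 := hmax.hasDerivAt_eq_zero (hd 0)
  have hslope : Tendsto (slope h' 0) (nhdsWithin 0 {(0:ℝ)}ᶜ) (nhds b) :=
    hasDerivAt_iff_tendsto_slope.1 hd2
  have hpos : ∀ᶠ t in nhdsWithin 0 {(0:ℝ)}ᶜ, 0 < slope h' 0 t :=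
    hslope.eventually (eventually_gt_nhds hb)
  rw [eventually_iff, Metric.mem_nhdsWithin_iff] at hpos
  obtain ⟨δ, hδ, hpos⟩ := hpos
  have hmax' : ∀ᶠ t in nhds 0, h t ≤ h 0 := hmax
  rw [Metric.eventually_nhds_iff] at hmax'
  obtain ⟨δ', hδ', hle⟩ := hmax'
  set t := min δ δ' / 2 with ht
  have htpos : 0 < t := by positivity
  have htδ : t < δ := by
    have : min δ δ' ≤ δ := min_le_left _ _
    simp only [ht]; linarith
  have htδ' : t < δ' := by
    have : min δ δ' ≤ δ' := min_le_right _ _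
    simp only [ht]; linarith
  obtain ⟨ξ, hξ, hξeq⟩ := exists_hasDerivAt_eq_slope h h' htpos
    (fun x _ => (hd x).continuousAt.continuousWithinAt) (fun x _ => hd x)
  have hξpos : 0 < h' ξ := by
    have h1 : 0 < slope h' 0 ξ := by
      apply hpos
      constructor
      · simp only [Metric.mem_ball, Real.dist_eq, sub_zero]
        rw [abs_of_pos hξ.1]; linarith [hξ.2]
      · exact Set.mem_compl_singleton_iff.2 (ne_of_gt hξ.1)
    have : slope h' 0 ξ = h' ξ / ξ := by
      simp [slope, h'0]; ring
    rw [this] at h1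
    exact (div_pos_iff.1 h1).resolve_right (fun ⟨_, h⟩ => absurd hξ.1 (not_lt.2 h.le)) |>.1
  have hht : h t ≤ h 0 := by
    apply hle
    simp only [Real.dist_eq, sub_zero]
    rw [abs_of_pos htpos]; exact htδ'
  rw [hξeq] at hξpos
  have : (h t - h 0) / (t - 0) ≤ 0 := by
    apply div_nonpos_of_nonpos_of_nonneg <;> linarith
  linarith

lemma eLap_nonpos_at_localMax {n : ℕ} {w : EuclideanSpace ℝ (Fin n) → ℝ}
    {x₀ : EuclideanSpace ℝ (Fin n)}
    {W2 : Fin n → (EuclideanSpace ℝ (Fin n) →L[ℝ] ℝ)}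
    (hw : Differentiable ℝ w)
    (hw2 : ∀ i, HasFDerivAt (fun y => fderiv ℝ w y (EuclideanSpace.single i 1)) (W2 i) x₀)
    (hmax : IsLocalMax w x₀) : eLap w x₀ ≤ 0 := by
  rw [eLap]
  apply Finset.sum_nonpos
  intro i _
  rw [(hw2 i).fderiv]
  set e : EuclideanSpace ℝ (Fin n) := EuclideanSpace.single i 1 with he
  set L : ℝ → EuclideanSpace ℝ (Fin n) := fun t => x₀ + t • e with hLdef
  have hL : ∀ t, HasDerivAt L e t := by
    intro t
    have h1 : HasDerivAt (fun t : ℝ => x₀ + t • e) ((1:ℝ) • e) t :=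
      ((hasDerivAt_id t).smul_const e).const_add x₀
    rwa [one_smul] at h1
  have hL0 : L 0 = x₀ := by simp [hLdef]
  have hd : ∀ t, HasDerivAt (w ∘ L) (fderiv ℝ w (L t) e) t := fun t =>
    (hw (L t)).hasFDerivAt.comp_hasDerivAt t (hL t)
  have hd2 : HasDerivAt (fun t => fderiv ℝ w (L t) e) (W2 i e) 0 := by
    have h := (hw2 i).comp_hasDerivAt_of_eq 0 (hL 0) hL0.symm
    exact h
  have hmaxc : IsLocalMax (w ∘ L) 0 := by
    apply IsLocalMax.comp_continuous (hL0 ▸ hmax)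
    exact (hL 0).continuousAt
  exact second_deriv_nonpos_at_localMax hd hd2 hmaxc

variable {n : ℕ}

local notation "E" => EuclideanSpace ℝ (Fin n)

lemma hasFDerivAt_proj (i : Fin n) (x : E) :
    HasFDerivAt (fun y : E => y i) (EuclideanSpace.proj i : E →L[ℝ] ℝ) x :=
  (EuclideanSpace.proj i : E →L[ℝ] ℝ).hasFDerivAt

lemma proj_single (i j : Fin n) :
    EuclideanSpace.proj (𝕜 := ℝ) j (EuclideanSpace.single i (1:ℝ)) = if i = j then 1 else 0 := by
  simp [EuclideanSpace.single_apply, eq_comm]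

lemma hasFDerivAt_cosh_coord (α : ℝ) (i : Fin n) (x : E) :
    HasFDerivAt (fun y : E => Real.cosh (α * y i))
      ((Real.sinh (α * x i) * α) • (EuclideanSpace.proj i : E →L[ℝ] ℝ)) x := by
  have hlin : HasDerivAt (fun t : ℝ => α * t) α (x i) := by
    simpa using (hasDerivAt_id (x i)).const_mul α
  have hc : HasDerivAt (fun t : ℝ => Real.cosh (α * t)) (Real.sinh (α * x i) * α) (x i) :=
    (Real.hasDerivAt_cosh (α * x i)).comp (x i) hlin
  exact hc.comp_hasFDerivAt x (hasFDerivAt_proj i x)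

lemma hasFDerivAt_sinh_coord (α : ℝ) (i : Fin n) (x : E) :
    HasFDerivAt (fun y : E => α * Real.sinh (α * y i))
      ((α * (Real.cosh (α * x i) * α)) • (EuclideanSpace.proj i : E →L[ℝ] ℝ)) x := by
  have hlin : HasDerivAt (fun t : ℝ => α * t) α (x i) := by
    simpa using (hasDerivAt_id (x i)).const_mul α
  have hs : HasDerivAt (fun t : ℝ => Real.sinh (α * t)) (Real.cosh (α * x i) * α) (x i) :=
    (Real.hasDerivAt_sinh (α * x i)).comp (x i) hlin
  have hs2 : HasDerivAt (fun t : ℝ => α * Real.sinh (α * t))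
      (α * (Real.cosh (α * x i) * α)) (x i) := hs.const_mul α
  have := hs2.comp_hasFDerivAt x (hasFDerivAt_proj i x)
  exact this

lemma hasFDerivAt_coshsum (α : ℝ) (x : E) :
    HasFDerivAt (fun y : E => ∑ i, Real.cosh (α * y i))
      (∑ i, (Real.sinh (α * x i) * α) • (EuclideanSpace.proj i : E →L[ℝ] ℝ)) x :=
  HasFDerivAt.fun_sum (fun i _ => hasFDerivAt_cosh_coord α i x)

lemma coshsum_deriv_apply (α : ℝ) (x : E) (i : Fin n) :
    (∑ j, (Real.sinh (α * x j) * α) • (EuclideanSpace.proj j : E →L[ℝ] ℝ))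
      (EuclideanSpace.single i 1) = Real.sinh (α * x i) * α := by
  rw [ContinuousLinearMap.sum_apply]
  rw [Finset.sum_eq_single i]
  · simp [proj_single]
  · intro j _ hj
    rw [ContinuousLinearMap.smul_apply, proj_single, if_neg (Ne.symm hj)]
    simp
  · simp


section W

lemma w_hasFDerivAt (α σ ε : ℝ) {u : E → ℝ} (hu : ContDiff ℝ (⊤ : ℕ∞) u) (y : E) :
    HasFDerivAt (fun y : E => σ * (u y - 1) - ε * ∑ i, Real.cosh (α * y i))
      (σ • fderiv ℝ u y - ε • ∑ i, (Real.sinh (α * y i) * α) • (EuclideanSpace.proj i : E →L[ℝ] ℝ)) y :=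
  ((((hu.differentiable (by simp)) y).hasFDerivAt.sub_const 1).const_mul σ).sub
    ((hasFDerivAt_coshsum α y).const_mul ε)

lemma w_differentiable (α σ ε : ℝ) {u : E → ℝ} (hu : ContDiff ℝ (⊤ : ℕ∞) u) :
    Differentiable ℝ (fun y : E => σ * (u y - 1) - ε * ∑ i, Real.cosh (α * y i)) :=
  fun y => (w_hasFDerivAt α σ ε hu y).differentiableAt

lemma w_fderiv_apply (α σ ε : ℝ) {u : E → ℝ} (hu : ContDiff ℝ (⊤ : ℕ∞) u) (y : E) (i : Fin n) :
    fderiv ℝ (fun y : E => σ * (u y - 1) - ε * ∑ i, Real.cosh (α * y i)) y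
        (EuclideanSpace.single i 1)
      = σ * fderiv ℝ u y (EuclideanSpace.single i 1) - ε * (Real.sinh (α * y i) * α) := by
  rw [(w_hasFDerivAt α σ ε hu y).fderiv]
  rw [ContinuousLinearMap.sub_apply, ContinuousLinearMap.smul_apply,
    ContinuousLinearMap.smul_apply, coshsum_deriv_apply]
  simp

lemma contDiff_F {u : E → ℝ} (hu : ContDiff ℝ (⊤ : ℕ∞) u) (i : Fin n) :
    ContDiff ℝ (⊤ : ℕ∞) (fun y : E => fderiv ℝ u y (EuclideanSpace.single i 1)) := by
  have h1 : ContDiff ℝ (⊤ : ℕ∞) (fderiv ℝ u) := hu.fderiv_right (by simp)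
  exact (ContinuousLinearMap.apply ℝ ℝ (EuclideanSpace.single i 1)).contDiff.comp h1

lemma w_second (α σ ε : ℝ) {u : E → ℝ} (hu : ContDiff ℝ (⊤ : ℕ∞) u) (x : E) (i : Fin n) :
    HasFDerivAt (fun y : E => fderiv ℝ (fun z : E => σ * (u z - 1) - ε * ∑ j, Real.cosh (α * z j)) y
        (EuclideanSpace.single i 1))
      (σ • fderiv ℝ (fun y : E => fderiv ℝ u y (EuclideanSpace.single i 1)) x
        - (ε * (α * (Real.cosh (α * x i) * α))) • (EuclideanSpace.proj i : E →L[ℝ] ℝ)) x := by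
  have hF := contDiff_F hu i
  have h1 : HasFDerivAt
      (fun y : E => σ * (fderiv ℝ u y (EuclideanSpace.single i 1)) - ε * (α * Real.sinh (α * y i)))
      (σ • fderiv ℝ (fun y : E => fderiv ℝ u y (EuclideanSpace.single i 1)) x
        - ε • ((α * (Real.cosh (α * x i) * α)) • (EuclideanSpace.proj i : E →L[ℝ] ℝ))) x :=
    (((hF.differentiable (by simp)) x).hasFDerivAt.const_mul σ).sub
      ((hasFDerivAt_sinh_coord α i x).const_mul ε)
  have heqf : (fun y : E => fderiv ℝ (fun z : E => σ * (u z - 1) - ε * ∑ j, Real.cosh (α * z j)) y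
      (EuclideanSpace.single i 1))
      = (fun y : E => σ * (fderiv ℝ u y (EuclideanSpace.single i 1))
          - ε * (α * Real.sinh (α * y i))) := by
    funext y
    rw [w_fderiv_apply α σ ε hu y i]
    ring
  rw [heqf, smul_smul] at *
  exact h1

lemma w_eLap (α σ ε : ℝ) {u : E → ℝ} (hu : ContDiff ℝ (⊤ : ℕ∞) u) (x : E) :
    eLap (fun y : E => σ * (u y - 1) - ε * ∑ i, Real.cosh (α * y i)) x
      = σ * eLap u x - ε * ((α * α) * ∑ i, Real.cosh (α * x i)) := by
  rw [eLap, eLap]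
  have hterm : ∀ i : Fin n,
      fderiv ℝ (fun y : E => fderiv ℝ (fun z : E => σ * (u z - 1) - ε * ∑ j, Real.cosh (α * z j)) y
        (EuclideanSpace.single i 1)) x (EuclideanSpace.single i 1)
      = σ * (fderiv ℝ (fun y : E => fderiv ℝ u y (EuclideanSpace.single i 1)) x
          (EuclideanSpace.single i 1)) - ε * ((α * α) * Real.cosh (α * x i)) := by
    intro i
    rw [(w_second α σ ε hu x i).fderiv]
    rw [ContinuousLinearMap.sub_apply, ContinuousLinearMap.smul_apply,
      ContinuousLinearMap.smul_apply, proj_single, if_pos rfl]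
    simp only [smul_eq_mul, mul_one]
    ring
  rw [Finset.sum_congr rfl (fun i _ => hterm i)]
  rw [Finset.sum_sub_distrib, ← Finset.mul_sum, ← Finset.mul_sum, ← Finset.mul_sum]

end W

lemma half_exp_abs_le_cosh (t : ℝ) : Real.exp |t| / 2 ≤ Real.cosh t := by
  rw [Real.cosh_eq]
  rcases abs_cases t with ⟨h, _⟩ | ⟨h, _⟩ <;> rw [h] <;>
    nlinarith [Real.exp_pos t, Real.exp_pos (-t)]

lemma coshsum_ge (hn : 0 < n) {α : ℝ} (hα : 0 ≤ α) (z : E) :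
    Real.exp (α * ‖z‖ / Real.sqrt n) / 2 ≤ ∑ i, Real.cosh (α * z i) := by
  haveI : Nonempty (Fin n) := ⟨⟨0, hn⟩⟩
  obtain ⟨i₀, -, hi₀⟩ := Finset.exists_max_image Finset.univ (fun i => |z i|)
    ⟨⟨0, hn⟩, Finset.mem_univ _⟩
  set M := |z i₀| with hM
  have hM0 : 0 ≤ M := abs_nonneg _
  have hnorm : ‖z‖ ≤ Real.sqrt n * M := by
    rw [EuclideanSpace.norm_eq]
    have h1 : ∑ i, ‖z i‖ ^ 2 ≤ ∑ _i : Fin n, M ^ 2 := by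
      apply Finset.sum_le_sum
      intro i _
      have := hi₀ i (Finset.mem_univ i)
      rw [Real.norm_eq_abs]
      nlinarith [abs_nonneg (z i)]
    calc Real.sqrt (∑ i, ‖z i‖ ^ 2) ≤ Real.sqrt (∑ _i : Fin n, M ^ 2) := Real.sqrt_le_sqrt h1
      _ = Real.sqrt (n * M ^ 2) := by rw [Finset.sum_const, Finset.card_univ, Fintype.card_fin,
            nsmul_eq_mul]
      _ = Real.sqrt n * M := by
          rw [Real.sqrt_mul (Nat.cast_nonneg n), Real.sqrt_sq hM0]
  have hsn : (0:ℝ) < Real.sqrt n := Real.sqrt_pos.2 (by exact_mod_cast hn)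
  have h2 : α * ‖z‖ / Real.sqrt n ≤ α * M := by
    rw [div_le_iff₀ hsn]
    calc α * ‖z‖ ≤ α * (Real.sqrt n * M) := by
          apply mul_le_mul_of_nonneg_left hnorm hα
      _ = α * M * Real.sqrt n := by ring
  have h3 : Real.exp (α * ‖z‖ / Real.sqrt n) / 2 ≤ Real.exp |α * z i₀| / 2 := by
    apply div_le_div_of_nonneg_right _ (by norm_num)
    · apply Real.exp_le_exp.2
      calc α * ‖z‖ / Real.sqrt n ≤ α * M := h2
        _ = |α * z i₀| := by rw [abs_mul, abs_of_nonneg hα]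
  refine h3.trans ((half_exp_abs_le_cosh _).trans ?_)
  exact Finset.single_le_sum (fun i _ => (Real.cosh_pos (x := α * z i)).le) (Finset.mem_univ i₀)

lemma eventually_poly_le_exp {C : ℝ} (hC : 0 < C) (N : ℕ) {ε β : ℝ} (hε : 0 < ε) (hβ : 0 < β) :
    ∃ R₀ : ℝ, ∀ r ≥ R₀, C * (1 + r) ^ N + 1 ≤ ε * (Real.exp (β * r) / 2) := by
  have hlo := isLittleO_pow_exp_pos_mul_atTop N hβ
  have hc2 : (0:ℝ) < ε / (2 * (C * 2 ^ N + 1)) := by positivity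
  have h1 : ∀ᶠ r : ℝ in atTop, ‖r ^ N‖ ≤ (ε / (2 * (C * 2 ^ N + 1))) * ‖Real.exp (β * r)‖ :=
    hlo.bound hc2
  have h2 : ∀ᶠ r : ℝ in atTop, (1:ℝ) ≤ r := eventually_ge_atTop 1
  obtain ⟨R₀, hR₀⟩ := (h1.and h2).exists_forall_of_atTop
  refine ⟨R₀, fun r hr => ?_⟩
  obtain ⟨hb, hr1⟩ := hR₀ r hr
  rw [Real.norm_eq_abs, Real.norm_eq_abs, abs_of_nonneg (by positivity),
    abs_of_nonneg (Real.exp_pos _).le] at hb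
  have hrN : (1:ℝ) ≤ r ^ N := one_le_pow₀ hr1
  have hple : (1 + r) ^ N ≤ 2 ^ N * r ^ N := by
    rw [← mul_pow]
    apply pow_le_pow_left₀ (by linarith) (by linarith)
  have key : C * (1 + r) ^ N + 1 ≤ (C * 2 ^ N + 1) * r ^ N := by
    nlinarith [pow_nonneg (by linarith : (0:ℝ) ≤ r) N]
  calc C * (1 + r) ^ N + 1 ≤ (C * 2 ^ N + 1) * r ^ N := key
    _ ≤ (C * 2 ^ N + 1) * ((ε / (2 * (C * 2 ^ N + 1))) * Real.exp (β * r)) := by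
        apply mul_le_mul_of_nonneg_left hb (by positivity)
    _ = ε * (Real.exp (β * r) / 2) := by field_simp

lemma key_estimate {n : ℕ} (hn : 0 < n) {c m : ℝ} (hc : 0 < c) (hm0 : 0 < m)
    {u : EuclideanSpace ℝ (Fin n) → ℝ} (hu : ContDiff ℝ (⊤ : ℕ∞) u)
    (heq : ∀ x, eLap u x = c * u x * (u x - 1))
    (hmb : ∀ x, m ≤ u x)
    {C : ℝ} (hC : 0 < C) {N : ℕ} (hgr : ∀ x, |u x| ≤ C * (1 + ‖x‖) ^ N)
    (σ : ℝ) (hσ : σ = 1 ∨ σ = -1) (x : EuclideanSpace ℝ (Fin n)) : σ * (u x - 1) ≤ 0 := by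
  set α := Real.sqrt (c * m) with hαdef
  have hα2 : α * α = c * m := Real.mul_self_sqrt (by positivity)
  have hαpos : 0 < α := Real.sqrt_pos.2 (by positivity)
  set β := α / Real.sqrt n with hβdef
  have hsn : (0:ℝ) < Real.sqrt n := Real.sqrt_pos.2 (by exact_mod_cast hn)
  have hβpos : 0 < β := div_pos hαpos hsn
  set g : EuclideanSpace ℝ (Fin n) → ℝ := fun y => ∑ i, Real.cosh (α * y i) with hgdef
  have hgpos : ∀ y, 0 < g y := by
    intro y
    exact Finset.sum_pos (fun i _ => Real.cosh_pos _) ⟨⟨0, hn⟩, Finset.mem_univ _⟩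
  suffices h : ∀ ε > 0, σ * (u x - 1) ≤ ε * g x by
    by_contra hpos
    push_neg at hpos
    have hgx := hgpos x
    have hε : 0 < σ * (u x - 1) / (2 * g x) := div_pos hpos (by positivity)
    have h2 := h _ hε
    have h3 : σ * (u x - 1) / (2 * g x) * g x = σ * (u x - 1) / 2 := by
      field_simp
    rw [h3] at h2
    linarith
  intro ε hε
  obtain ⟨R₀, hR₀⟩ := eventually_poly_le_exp hC N hε hβpos
  set R := max R₀ (‖x‖ + 1) with hRdef
  have hRx : ‖x‖ < R := lt_of_lt_of_le (by linarith [norm_nonneg x]) (le_max_right _ _)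
  have hRpos : 0 < R := lt_of_le_of_lt (norm_nonneg x) hRx
  have hRbound : ∀ z : EuclideanSpace ℝ (Fin n), ‖z‖ = R → C * (1 + R) ^ N + 1 ≤ ε * g z := by
    intro z hz
    have h1 := hR₀ R (le_max_left _ _)
    have h2 : Real.exp (β * R) / 2 ≤ g z := by
      have := coshsum_ge hn hαpos.le z
      rw [hz] at this
      calc Real.exp (β * R) / 2 = Real.exp (α * R / Real.sqrt n) / 2 := by
            rw [hβdef]; ring_nf
        _ ≤ g z := this
    calc C * (1 + R) ^ N + 1 ≤ ε * (Real.exp (β * R) / 2) := h1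
      _ ≤ ε * g z := mul_le_mul_of_nonneg_left h2 hε.le
  set w : EuclideanSpace ℝ (Fin n) → ℝ := fun y => σ * (u y - 1) - ε * g y with hwdef
  suffices hw : w x ≤ 0 by
    have : σ * (u x - 1) - ε * g x ≤ 0 := hw
    linarith
  have hwcont : Continuous w := (w_differentiable α σ ε hu).continuous
  obtain ⟨x₀, hx₀mem, hx₀max⟩ := (isCompact_closedBall (0 : EuclideanSpace ℝ (Fin n)) R).exists_isMaxOn
    ⟨0, Metric.mem_closedBall_self hRpos.le⟩ hwcont.continuousOn
  have hxmem : x ∈ Metric.closedBall (0 : EuclideanSpace ℝ (Fin n)) R := by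
    rw [Metric.mem_closedBall, dist_zero_right]; exact hRx.le
  rcases le_or_gt (w x₀) 0 with h0 | h0
  · exact (hx₀max hxmem).trans h0
  · exfalso
    have hσabs : |σ| = 1 := by rcases hσ with h | h <;> rw [h] <;> norm_num
    have hx₀R : ‖x₀‖ < R := by
      rcases lt_or_eq_of_le (by simpa [Metric.mem_closedBall, dist_zero_right] using hx₀mem :
        ‖x₀‖ ≤ R) with h | h
      · exact h
      · exfalso
        have hb := hRbound x₀ h
        have habs : σ * (u x₀ - 1) ≤ C * (1 + R) ^ N + 1 := by
          calc σ * (u x₀ - 1) ≤ |σ * (u x₀ - 1)| := le_abs_self _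
            _ = |u x₀ - 1| := by rw [abs_mul, hσabs, one_mul]
            _ ≤ |u x₀| + 1 := by
                calc |u x₀ - 1| ≤ |u x₀| + |(1:ℝ)| := abs_sub _ _
                  _ = |u x₀| + 1 := by norm_num
            _ ≤ C * (1 + ‖x₀‖) ^ N + 1 := by linarith [hgr x₀]
            _ = C * (1 + R) ^ N + 1 := by rw [h]
        have : w x₀ ≤ 0 := by
          have : σ * (u x₀ - 1) - ε * g x₀ ≤ 0 := by linarith
          exact this
        linarith
    have hlocmax : IsLocalMax w x₀ := by
      apply hx₀max.isLocalMax
      exact mem_nhds_iff.2 ⟨Metric.ball 0 R, Metric.ball_subset_closedBall, Metric.isOpen_ball,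
        by rwa [Metric.mem_ball, dist_zero_right]⟩
    have hlap : eLap w x₀ ≤ 0 :=
      eLap_nonpos_at_localMax (w_differentiable α σ ε hu)
        (fun i => w_second α σ ε hu x₀ i) hlocmax
    have hlapeq : eLap w x₀ = σ * (c * u x₀ * (u x₀ - 1)) - ε * (c * m * g x₀) := by
      rw [hwdef]
      rw [w_eLap α σ ε hu x₀, heq x₀, hα2]
    have hA : 0 < σ * (u x₀ - 1) - ε * g x₀ := h0
    have hgx₀ := hgpos x₀
    have hu₀ : m ≤ u x₀ := hmb x₀
    have hstep : σ * (c * u x₀ * (u x₀ - 1)) = c * u x₀ * (σ * (u x₀ - 1)) := by ring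
    have hpos2 : 0 < σ * (u x₀ - 1) := by nlinarith
    have : 0 < eLap w x₀ := by
      rw [hlapeq, hstep]
      have h5 : c * m * (σ * (u x₀ - 1)) ≤ c * u x₀ * (σ * (u x₀ - 1)) := by
        nlinarith [mul_nonneg (mul_nonneg hc.le (sub_nonneg.2 hu₀)) hpos2.le]
      have h6 : c * m * (ε * g x₀) < c * m * (σ * (u x₀ - 1)) := by nlinarith [mul_pos hc hm0]
      nlinarith [mul_pos hc hm0]
    linarith

/-- Theorem 1.4 of the paper on Euclidean space: a smooth solution of the Fisher equation
`Δu − cu(u−1) = 0` on ℝⁿ with `u ≥ m > 0` and of polynomial growth is constant. -/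
theorem fisher_liouville (n : ℕ) (c : ℝ) (hc : 0 < c)
    (u : EuclideanSpace ℝ (Fin n) → ℝ) (hu : ContDiff ℝ (⊤ : ℕ∞) u)
    (heq : ∀ x, eLap u x - c * u x * (u x - 1) = 0)
    (hm : ∃ m : ℝ, 0 < m ∧ ∀ x, u x ≥ m)
    (hgrowth : ∃ C : ℝ, 0 < C ∧ ∃ N : ℕ, ∀ x, |u x| ≤ C * (1 + ‖x‖) ^ N) :
    ∀ x y, u x = u y := by
  obtain ⟨m, hm0, hmb⟩ := hm
  obtain ⟨C, hC, N, hgr⟩ := hgrowth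
  rcases Nat.eq_zero_or_pos n with hn | hn
  · subst hn
    intro x y
    have hxy : x = y := by ext i; exact i.elim0
    rw [hxy]
  · have h1 : ∀ z, u z = 1 := by
      have heq' : ∀ x, eLap u x = c * u x * (u x - 1) := fun x => by linarith [heq x]
      intro z
      have ha := key_estimate hn hc hm0 hu heq' hmb hC hgr 1 (Or.inl rfl) z
      have hb := key_estimate hn hc hm0 hu heq' hmb hC hgr (-1) (Or.inr rfl) z
      linarith
    intro x y
    rw [h1 x, h1 y]
end

section
/- Let E = EuclideanSpace ℝ (Fin n) and let f : E → ℝ be a smooth convex function (Hess f(x)(v,v) ≥ 0 for all x, v, so that the Bakry–Émery curvature of (E, f) is nonnegative, since ℝⁿ is flat). Let u : E → ℝ be a smooth bounded function satisfying Δ_f u − u³ + u = 0 on all of E (a bounded standing solution of the Allen–Cahn equation u_t = Δ_f u − u³ + u). If there exists m > 0 such that u(x)² ≥ m² for all x ∈ E, then u is constant. -/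
open Real Filter


variable {n : ℕ}

noncomputable def wb {n : ℕ} (x : EuclideanSpace ℝ (Fin n)) : ℝ := Real.log (1 + ‖x‖^2)

lemma Npos (x : EuclideanSpace ℝ (Fin n)) : (0:ℝ) < 1 + ‖x‖^2 := by positivity

lemma wb_nonneg (x : EuclideanSpace ℝ (Fin n)) : 0 ≤ wb x :=
  Real.log_nonneg (by nlinarith [sq_nonneg ‖x‖])

lemma contDiff_wb : ContDiff ℝ (⊤ : ℕ∞) (wb (n := n)) :=
  (contDiff_const.add (contDiff_norm_sq ℝ)).log fun x => (Npos x).ne'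

lemma hasFDerivAt_wb (x : EuclideanSpace ℝ (Fin n)) :
    HasFDerivAt wb ((1 + ‖x‖^2)⁻¹ • (2:ℕ) • innerSL ℝ x) x := by
  have h : HasFDerivAt (fun y : EuclideanSpace ℝ (Fin n) => 1 + ‖y‖^2)
      ((2:ℕ) • innerSL ℝ x) x := ((hasStrictFDerivAt_norm_sq x).hasFDerivAt).const_add 1
  exact h.log (Npos x).ne'

lemma fderiv_wb_apply (x v : EuclideanSpace ℝ (Fin n)) :
    fderiv ℝ wb x v = (1 + ‖x‖^2)⁻¹ * (2 * inner ℝ x v) := by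
  rw [(hasFDerivAt_wb x).fderiv]
  simp [mul_comm, mul_assoc]

lemma gradient_wb (x : EuclideanSpace ℝ (Fin n)) :
    gradient wb x = ((1 + ‖x‖^2)⁻¹ * 2) • x := by
  have h : HasGradientAt wb (((1 + ‖x‖^2)⁻¹ * 2) • x) x := by
    rw [hasGradientAt_iff_hasFDerivAt]
    refine (hasFDerivAt_wb x).congr_fderiv ?_
    ext v
    simp [InnerProductSpace.toDual_apply_apply, inner_smul_left]; ring
  exact h.gradient

lemma second_wb_le (x v : EuclideanSpace ℝ (Fin n)) (hv : (inner ℝ v v : ℝ) = 1) :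
    fderiv ℝ (fun y => fderiv ℝ wb y v) x v ≤ 2 := by
  have hFeq : (fun y : EuclideanSpace ℝ (Fin n) => fderiv ℝ wb y v)
      = fun y => (2 * (inner ℝ v y : ℝ)) * ((1 + ‖y‖^2)⁻¹) := by
    funext y; rw [fderiv_wb_apply, real_inner_comm]; ring
  have h1 : HasFDerivAt (fun y : EuclideanSpace ℝ (Fin n) => 2 * (inner ℝ v y : ℝ))
      ((2:ℝ) • innerSL ℝ v) x := ((innerSL ℝ v).hasFDerivAt).const_mul 2
  have hN : HasFDerivAt (fun y : EuclideanSpace ℝ (Fin n) => 1 + ‖y‖^2)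
      ((2:ℕ) • innerSL ℝ x) x := ((hasStrictFDerivAt_norm_sq x).hasFDerivAt).const_add 1
  have hInv : HasFDerivAt (fun y : EuclideanSpace ℝ (Fin n) => (1 + ‖y‖^2)⁻¹)
      ((-((1 + ‖x‖^2)^2)⁻¹) • ((2:ℕ) • innerSL ℝ x)) x := by
    have := (hasDerivAt_inv (Npos x).ne').comp_hasFDerivAt x hN
    simpa [Function.comp_def] using this
  have hF := h1.fun_mul hInv
  rw [hFeq, hF.fderiv]
  have hx1 : (1:ℝ) ≤ 1 + ‖x‖^2 := by nlinarith [sq_nonneg ‖x‖]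
  have h2 : (1 + ‖x‖^2)⁻¹ ≤ 1 := inv_le_one_of_one_le₀ hx1
  have h3 : (0:ℝ) < ((1 + ‖x‖^2)^2)⁻¹ := by positivity
  simp only [ContinuousLinearMap.add_apply, ContinuousLinearMap.smul_apply, innerSL_apply_apply,
    smul_eq_mul, nsmul_eq_mul, hv, real_inner_comm x v]
  nlinarith [mul_nonneg h3.le (mul_self_nonneg (inner ℝ x v : ℝ)), mul_nonneg h3.le (mul_self_nonneg (inner ℝ v x : ℝ))]

/-- 1D second derivative test at a global max. -/
lemma deriv2_nonpos_aux {φ ψ : ℝ → ℝ} {a : ℝ} (hφ : ∀ t, HasDerivAt φ (ψ t) t)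
    (hmax : ∀ t, φ t ≤ φ 0) (hψ0 : ψ 0 = 0) (hψ : HasDerivAt ψ a 0) : a ≤ 0 := by
  by_contra hpos
  push_neg at hpos
  have hslope : Tendsto (slope ψ 0) (nhdsWithin 0 {(0:ℝ)}ᶜ) (nhds a) :=
    hasDerivAt_iff_tendsto_slope.1 hψ
  have hev : ∀ᶠ t in nhdsWithin 0 {(0:ℝ)}ᶜ, 0 < slope ψ 0 t :=
    hslope.eventually (eventually_gt_nhds hpos)
  have hev' : ∀ᶠ t in nhdsWithin 0 (Set.Ioi 0), 0 < slope ψ 0 t :=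
    hev.filter_mono (nhdsWithin_mono 0 (fun t ht => ne_of_gt ht))
  obtain ⟨u, hu0, hsub⟩ := mem_nhdsGT_iff_exists_Ioo_subset.1 hev'
  have hupos : 0 < u := hu0
  set t0 := u / 2 with ht0
  have ht0pos : 0 < t0 := by positivity
  obtain ⟨c, hc, hceq⟩ := exists_hasDerivAt_eq_slope φ ψ ht0pos
    (fun t _ => (hφ t).continuousAt.continuousWithinAt) (fun t _ => hφ t)
  have hcIoo : c ∈ Set.Ioo 0 u := ⟨hc.1, lt_of_lt_of_le hc.2 (by linarith)⟩
  have hψc : 0 < slope ψ 0 c := hsub hcIoo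
  have hψcpos : 0 < ψ c := by
    have : slope ψ 0 c = ψ c / c := by simp [slope_def_field, hψ0]
    rw [this] at hψc
    exact (div_pos_iff.1 hψc).resolve_right (fun h => absurd hc.1 (not_lt.2 h.2.le)) |>.1
  have : 0 < φ t0 - φ 0 := by
    have h1 : ψ c = (φ t0 - φ 0) / (t0 - 0) := hceq
    rw [h1] at hψcpos
    simp only [sub_zero] at hψcpos
    rcases div_pos_iff.1 hψcpos with ⟨h, _⟩ | ⟨_, h2⟩
    · exact h
    · linarith
  linarith [hmax t0]

lemma contDiff_fderiv_apply {g : EuclideanSpace ℝ (Fin n) → ℝ} (hg : ContDiff ℝ (⊤ : ℕ∞) g)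
    (v : EuclideanSpace ℝ (Fin n)) : ContDiff ℝ (⊤ : ℕ∞) (fun y => fderiv ℝ g y v) := by
  exact (hg.fderiv_right (by simp)).clm_apply contDiff_const

/-- Second derivative test at a global maximum, directional version. -/
lemma second_deriv_nonpos_at_max {h : EuclideanSpace ℝ (Fin n) → ℝ} (hh : ContDiff ℝ (⊤ : ℕ∞) h)
    {x₀ : EuclideanSpace ℝ (Fin n)} (hmax : ∀ y, h y ≤ h x₀) (v : EuclideanSpace ℝ (Fin n)) :
    fderiv ℝ (fun y => fderiv ℝ h y v) x₀ v ≤ 0 := by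
  have hL : ∀ t : ℝ, HasDerivAt (fun s : ℝ => x₀ + s • v) v t := by
    intro t
    simpa using ((hasDerivAt_id t).smul_const v).const_add x₀
  have hφ : ∀ t : ℝ, HasDerivAt (fun s => h (x₀ + s • v)) (fderiv ℝ h (x₀ + t • v) v) t := by
    intro t
    exact ((hh.differentiable (by simp)) _).hasFDerivAt.comp_hasDerivAt t (hL t)
  have hψ : HasDerivAt (fun s : ℝ => fderiv ℝ h (x₀ + s • v) v)
      (fderiv ℝ (fun y => fderiv ℝ h y v) x₀ v) 0 := by
    have := (((contDiff_fderiv_apply hh v).differentiable (by simp))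
      (x₀ + (0:ℝ) • v)).hasFDerivAt.comp_hasDerivAt 0 (hL 0)
    simpa [Function.comp_def] using this
  have hgrad0 : fderiv ℝ h x₀ = 0 := by
    refine IsLocalMax.fderiv_eq_zero ?_
    exact Filter.Eventually.of_forall hmax
  refine deriv2_nonpos_aux hφ (fun t => by simpa using hmax (x₀ + t • v)) ?_ hψ
  simp [hgrad0]

lemma inner_gradient {g : EuclideanSpace ℝ (Fin n) → ℝ} (y x : EuclideanSpace ℝ (Fin n)) :
    (inner ℝ (gradient g y) x : ℝ) = fderiv ℝ g y x := by
  rw [gradient, InnerProductSpace.toDual_symm_apply]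

/-- Monotonicity of the gradient along rays, from convexity. -/
lemma grad_ray_mono {f : EuclideanSpace ℝ (Fin n) → ℝ} (hf : ContDiff ℝ (⊤ : ℕ∞) f)
    (hHess : ∀ x v : EuclideanSpace ℝ (Fin n),
      0 ≤ fderiv ℝ (fun y => fderiv ℝ f y v) x v)
    (x : EuclideanSpace ℝ (Fin n)) : fderiv ℝ f 0 x ≤ fderiv ℝ f x x := by
  have hL : ∀ t : ℝ, HasDerivAt (fun s : ℝ => s • x) x t := by
    intro t; simpa using (hasDerivAt_id t).smul_const x
  have hg : ∀ t : ℝ, HasDerivAt (fun s : ℝ => fderiv ℝ f (s • x) x)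
      (fderiv ℝ (fun y => fderiv ℝ f y x) (t • x) x) t := by
    intro t
    have := (((contDiff_fderiv_apply hf x).differentiable (by simp))
      (t • x)).hasFDerivAt.comp_hasDerivAt t (hL t)
    simpa [Function.comp_def] using this
  have hmono : Monotone (fun s : ℝ => fderiv ℝ f (s • x) x) := by
    refine monotone_of_deriv_nonneg (fun t => (hg t).differentiableAt) (fun t => ?_)
    rw [(hg t).deriv]; exact hHess _ _
  have := hmono (show (0:ℝ) ≤ 1 by norm_num)
  simpa using this

lemma inner_grad_wb_ge {f : EuclideanSpace ℝ (Fin n) → ℝ} (hf : ContDiff ℝ (⊤ : ℕ∞) f)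
    (hHess : ∀ x v : EuclideanSpace ℝ (Fin n),
      0 ≤ fderiv ℝ (fun y => fderiv ℝ f y v) x v)
    (x : EuclideanSpace ℝ (Fin n)) :
    -‖gradient f 0‖ ≤ (inner ℝ (gradient f x) (gradient wb x) : ℝ) := by
  rw [gradient_wb, real_inner_smul_right]
  have hI : -(‖gradient f 0‖ * ‖x‖) ≤ (inner ℝ (gradient f x) x : ℝ) := by
    have h1 : fderiv ℝ f 0 x ≤ fderiv ℝ f x x := grad_ray_mono hf hHess x
    have h2 : |(inner ℝ (gradient f 0) x : ℝ)| ≤ ‖gradient f 0‖ * ‖x‖ :=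
      abs_real_inner_le_norm _ _
    rw [inner_gradient]
    rw [inner_gradient] at h2
    have := abs_le.1 h2
    linarith [this.1]
  have hN : (0:ℝ) < 1 + ‖x‖^2 := Npos x
  have h2 : 2 * ‖x‖ ≤ 1 + ‖x‖^2 := by nlinarith [sq_nonneg (‖x‖ - 1)]
  have hK : (0:ℝ) ≤ ‖gradient f 0‖ := norm_nonneg _
  have key : -(‖gradient f 0‖ * (1 + ‖x‖^2)) ≤ 2 * (inner ℝ (gradient f x) x : ℝ) := by
    nlinarith [norm_nonneg x]
  rw [show (1 + ‖x‖^2)⁻¹ * 2 * (inner ℝ (gradient f x) x : ℝ)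
      = (2 * (inner ℝ (gradient f x) x : ℝ)) / (1 + ‖x‖^2) by rw [div_eq_inv_mul]; ring]
  rw [le_div_iff₀ hN]
  linarith

lemma eLapF_neg {f u : EuclideanSpace ℝ (Fin n) → ℝ} (x : EuclideanSpace ℝ (Fin n)) :
    eLapF f (fun y => -u y) x = -eLapF f u x := by
  unfold eLapF eLap
  have h1 : ∀ v : EuclideanSpace ℝ (Fin n),
      (fun y : EuclideanSpace ℝ (Fin n) => fderiv ℝ (fun z => -u z) y v)
      = fun y => -(fderiv ℝ u y v) := by
    intro v; funext y; rw [fderiv_fun_neg]; simp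
  have h2 : gradient (fun y : EuclideanSpace ℝ (Fin n) => -u y) x = -gradient u x := by
    rw [gradient, gradient, fderiv_fun_neg, map_neg]
  rw [h2, inner_neg_right]
  have h3 : ∀ i : Fin n,
      fderiv ℝ (fun y => fderiv ℝ (fun z => -u z) y (EuclideanSpace.single i 1)) x
        (EuclideanSpace.single i 1)
      = -(fderiv ℝ (fun y => fderiv ℝ u y (EuclideanSpace.single i 1)) x
        (EuclideanSpace.single i 1)) := by
    intro i
    rw [h1, fderiv_fun_neg]
    simp
  rw [Finset.sum_congr rfl (fun i _ => h3 i), Finset.sum_neg_distrib]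
  ring

lemma maxpt {f u : EuclideanSpace ℝ (Fin n) → ℝ} (hf : ContDiff ℝ (⊤ : ℕ∞) f)
    (hHess : ∀ x v : EuclideanSpace ℝ (Fin n),
      0 ≤ fderiv ℝ (fun y => fderiv ℝ f y v) x v)
    (hu : ContDiff ℝ (⊤ : ℕ∞) u) {ε : ℝ} (hε : 0 < ε) {x₀ : EuclideanSpace ℝ (Fin n)}
    (hmax : ∀ y, u y - ε * wb y ≤ u x₀ - ε * wb x₀) :
    eLapF f u x₀ ≤ ε * (2 * n + ‖gradient f 0‖) := by
  set h : EuclideanSpace ℝ (Fin n) → ℝ := fun y => u y - ε * wb y with hh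
  have hhc : ContDiff ℝ (⊤ : ℕ∞) h := hu.sub (contDiff_const.mul contDiff_wb)
  have hud := hu.differentiable (by simp)
  have hwd := (contDiff_wb (n := n)).differentiable (by simp)
  have hfd : ∀ y, fderiv ℝ h y = fderiv ℝ u y - ε • fderiv ℝ wb y := by
    intro y
    rw [hh]
    rw [fderiv_fun_sub (hud y) ((hwd y).const_mul ε), fderiv_const_mul (hwd y)]
  have hcrit : fderiv ℝ h x₀ = 0 := IsLocalMax.fderiv_eq_zero (.of_forall hmax)
  have hfu : fderiv ℝ u x₀ = ε • fderiv ℝ wb x₀ := by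
    have := hfd x₀
    rw [hcrit] at this
    exact sub_eq_zero.1 this.symm
  have hgu : gradient u x₀ = ε • gradient wb x₀ := by
    rw [gradient, gradient, hfu, map_smul]
  have hsec : ∀ v : EuclideanSpace ℝ (Fin n), (inner ℝ v v : ℝ) = 1 →
      fderiv ℝ (fun y => fderiv ℝ u y v) x₀ v ≤ 2 * ε := by
    intro v hv
    have hD : fderiv ℝ (fun y => fderiv ℝ h y v) x₀ v ≤ 0 :=
      second_deriv_nonpos_at_max hhc hmax v
    have heq2 : (fun y => fderiv ℝ h y v) = fun y => fderiv ℝ u y v - ε * fderiv ℝ wb y v := by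
      funext y; rw [hfd y]; simp
    rw [heq2] at hD
    rw [fderiv_fun_sub (((contDiff_fderiv_apply hu v).differentiable (by simp)) x₀)
      ((((contDiff_fderiv_apply contDiff_wb v).differentiable (by simp)) x₀).const_mul ε),
      fderiv_const_mul (((contDiff_fderiv_apply contDiff_wb v).differentiable (by simp)) x₀)] at hD
    simp only [ContinuousLinearMap.sub_apply, ContinuousLinearMap.smul_apply, smul_eq_mul] at hD
    have hwb2 := second_wb_le x₀ v hv
    nlinarith
  have hL : eLap u x₀ ≤ 2 * n * ε := by
    unfold eLap
    have hb : ∀ i : Fin n, fderiv ℝ (fun y => fderiv ℝ u y (EuclideanSpace.single i 1)) x₀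
        (EuclideanSpace.single i 1) ≤ 2 * ε := by
      intro i
      refine hsec _ ?_
      simp [EuclideanSpace.inner_single_left, EuclideanSpace.single_apply]
    calc (∑ i : Fin n, fderiv ℝ (fun y => fderiv ℝ u y (EuclideanSpace.single i 1)) x₀
        (EuclideanSpace.single i 1)) ≤ ∑ _i : Fin n, 2 * ε :=
          Finset.sum_le_sum fun i _ => hb i
      _ = 2 * n * ε := by simp [Finset.sum_const]; ring
  have hinner : (inner ℝ (gradient f x₀) (gradient u x₀) : ℝ)
      = ε * (inner ℝ (gradient f x₀) (gradient wb x₀) : ℝ) := by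
    rw [hgu, real_inner_smul_right]
  have hbnd := inner_grad_wb_ge hf hHess x₀
  unfold eLapF
  rw [hinner]
  nlinarith [norm_nonneg (gradient f 0)]

lemma exists_max {u : EuclideanSpace ℝ (Fin n) → ℝ} (hu : Continuous u)
    {C : ℝ} (hC : ∀ x, |u x| ≤ C) {ε : ℝ} (hε : 0 < ε) :
    ∃ x₀, ∀ y, u y - ε * wb y ≤ u x₀ - ε * wb x₀ := by
  have hwtop : Tendsto (wb (n := n)) (Filter.cocompact _) atTop := by
    have h1 : Tendsto (fun x : EuclideanSpace ℝ (Fin n) => ‖x‖) (Filter.cocompact _) atTop :=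
      tendsto_norm_cocompact_atTop
    have h2 : Tendsto (fun t : ℝ => Real.log (1 + t ^ 2)) atTop atTop :=
      Real.tendsto_log_atTop.comp
        (tendsto_atTop_add_const_left _ 1 (tendsto_pow_atTop two_ne_zero))
    exact h2.comp h1
  have h3 : Tendsto (fun y : EuclideanSpace ℝ (Fin n) => C + -ε * wb y)
      (Filter.cocompact _) atBot :=
    tendsto_atBot_add_const_left _ C (hwtop.const_mul_atTop_of_neg (by linarith))
  have hg : Tendsto (fun y : EuclideanSpace ℝ (Fin n) => u y - ε * wb y)
      (Filter.cocompact _) atBot :=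
    tendsto_atBot_mono (fun y => by have := abs_le.1 (hC y); nlinarith) h3
  exact (hu.sub (continuous_const.mul (contDiff_wb (n := n)).continuous)).exists_forall_ge hg

lemma le_of_forall_eps {a b D : ℝ} (hD : 0 ≤ D) (h : ∀ ε : ℝ, 0 < ε → a ≤ b + ε * D) :
    a ≤ b := by
  by_contra h'
  push_neg at h'
  have hd1 : (0:ℝ) < D + 1 := by linarith
  have hε : 0 < (a - b) / (D + 1) := div_pos (by linarith) hd1
  have h2 := h _ hε
  have key : (a - b) / (D + 1) * D < a - b := by
    rw [div_mul_eq_mul_div, div_lt_iff₀ hd1]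
    nlinarith
  linarith

lemma pos_case {f u : EuclideanSpace ℝ (Fin n) → ℝ} (hf : ContDiff ℝ (⊤ : ℕ∞) f)
    (hHess : ∀ x v : EuclideanSpace ℝ (Fin n),
      0 ≤ fderiv ℝ (fun y => fderiv ℝ f y v) x v)
    (hu : ContDiff ℝ (⊤ : ℕ∞) u) {C₀ : ℝ} (hC : ∀ x, |u x| ≤ C₀)
    (heq : ∀ x, eLapF f u x - u x ^ 3 + u x = 0)
    {m : ℝ} (hm : 0 < m) (hge : ∀ x, m ≤ u x) : ∀ y, u y = 1 := by
  set K := ‖gradient f 0‖ with hK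
  have hK0 : 0 ≤ K := norm_nonneg _
  set C : ℝ := 2 * n + K with hCdef
  have hC0 : 0 ≤ C := by
    have : (0:ℝ) ≤ (n:ℝ) := Nat.cast_nonneg n
    rw [hCdef]; linarith
  have hub : ∀ y, u y ≤ 1 := by
    intro y
    refine le_of_forall_eps (b := 1) (D := C + wb y)
      (by linarith [wb_nonneg y]) (fun ε hε => ?_)
    obtain ⟨x₀, hx₀⟩ := exists_max hu.continuous hC hε
    have h1 : eLapF f u x₀ ≤ ε * C := maxpt hf hHess hu hε hx₀
    have h2 : u x₀ ^ 3 - u x₀ ≤ ε * C := by have := heq x₀; linarith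
    have h3 : u x₀ ≤ 1 + ε * C := by
      rcases le_or_gt (u x₀) 1 with h | h
      · nlinarith
      · nlinarith [sq_nonneg (u x₀), sq_nonneg (u x₀ - 1), sq_nonneg (u x₀ + 1)]
    have h4 := hx₀ y
    have h5 := wb_nonneg x₀
    have h6 := wb_nonneg y
    nlinarith [mul_nonneg hε.le h5]
  have hlb : ∀ y, 1 ≤ u y := by
    intro y
    have hD : 0 ≤ C / m + wb y := by
      have := div_nonneg hC0 hm.le
      linarith [wb_nonneg y]
    have key : ∀ ε : ℝ, 0 < ε → 1 - u y ≤ 0 + ε * (C / m + wb y) := by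
      intro ε hε
      have hCneg : ∀ x, |(-u x)| ≤ C₀ := fun x => by rw [abs_neg]; exact hC x
      obtain ⟨x₁, hx₁⟩ := exists_max (u := fun z => -u z) hu.continuous.neg hCneg hε
      have h1 : eLapF f (fun z => -u z) x₁ ≤ ε * C := maxpt hf hHess hu.neg hε hx₁
      rw [eLapF_neg] at h1
      have h2 : -(ε * C) ≤ u x₁ ^ 3 - u x₁ := by have := heq x₁; linarith
      have hm1 := hge x₁
      have h3 : 1 - ε * (C / m) ≤ u x₁ := by
        rcases le_or_gt 1 (u x₁) with h | h
        · have : 0 ≤ ε * (C / m) := mul_nonneg hε.le (div_nonneg hC0 hm.le)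
          linarith
        · have hAux : (0:ℝ) ≤ u x₁ * (1 + u x₁) - m := by nlinarith
          have h4 : m * (1 - u x₁) ≤ ε * C := by
            nlinarith [mul_nonneg (by linarith : (0:ℝ) ≤ 1 - u x₁) hAux]
          have h5 : 1 - u x₁ ≤ ε * C / m := by
            rw [le_div_iff₀ hm]; linarith
          have h6 : ε * (C / m) = ε * C / m := by ring
          linarith
      have h6 := hx₁ y
      have h7 := wb_nonneg x₁
      nlinarith [mul_nonneg hε.le h7, wb_nonneg y]
    have := le_of_forall_eps hD key
    linarith
  intro y
  exact le_antisymm (hub y) (hlb y)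

theorem weighted_allen_cahn_liouville' (n : ℕ)
    (f : EuclideanSpace ℝ (Fin n) → ℝ) (hf : ContDiff ℝ (⊤ : ℕ∞) f)
    (hHess : ∀ x v : EuclideanSpace ℝ (Fin n),
      0 ≤ fderiv ℝ (fun y => fderiv ℝ f y v) x v)
    (u : EuclideanSpace ℝ (Fin n) → ℝ) (hu : ContDiff ℝ (⊤ : ℕ∞) u)
    (hbd : ∃ C : ℝ, ∀ x, |u x| ≤ C)
    (heq : ∀ x, eLapF f u x - u x ^ 3 + u x = 0)
    (hm : ∃ m : ℝ, 0 < m ∧ ∀ x, u x ^ 2 ≥ m ^ 2) :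
    ∀ x y, u x = u y := by
  obtain ⟨C₀, hC⟩ := hbd
  obtain ⟨m, hmp, hmge⟩ := hm
  have hdich : ∀ x, m ≤ u x ∨ u x ≤ -m := by
    intro x
    have := hmge x
    rcases le_or_gt 0 (u x) with h | h
    · left; nlinarith
    · right; nlinarith
  have hA : IsClosed {x : EuclideanSpace ℝ (Fin n) | m ≤ u x} :=
    isClosed_le continuous_const hu.continuous
  have hB : IsClosed {x : EuclideanSpace ℝ (Fin n) | u x ≤ -m} :=
    isClosed_le hu.continuous continuous_const
  have hcompl : {x : EuclideanSpace ℝ (Fin n) | m ≤ u x}ᶜ = {x | u x ≤ -m} := by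
    ext x
    simp only [Set.mem_compl_iff, Set.mem_setOf_eq, not_le]
    constructor
    · intro h
      rcases hdich x with h' | h'
      · linarith
      · exact h'
    · intro h; linarith
  have hclopen : IsClopen {x : EuclideanSpace ℝ (Fin n) | m ≤ u x} := by
    refine ⟨hA, ?_⟩
    rw [← isClosed_compl_iff, hcompl]
    exact hB
  rcases isClopen_iff.1 hclopen with hempty | huniv
  · -- u ≤ -m everywhere; apply pos_case to -u
    have hge : ∀ x, m ≤ -u x := by
      intro x
      have hx : x ∉ {x : EuclideanSpace ℝ (Fin n) | m ≤ u x} := by rw [hempty]; exact id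
      rcases hdich x with h | h
      · exact absurd h hx
      · linarith
    have hCneg : ∀ x, |(-u x)| ≤ C₀ := fun x => by rw [abs_neg]; exact hC x
    have hveq : ∀ x, eLapF f (fun z => -u z) x - (-u x) ^ 3 + (-u x) = 0 := by
      intro x
      rw [eLapF_neg]
      have := heq x
      ring_nf
      ring_nf at this
      linarith
    have hone := pos_case hf hHess hu.neg hCneg hveq hmp hge
    intro x y
    have hx := hone x
    have hy := hone y
    linarith
  · have hge : ∀ x, m ≤ u x := fun x => by
      have : x ∈ {x : EuclideanSpace ℝ (Fin n) | m ≤ u x} := huniv ▸ Set.mem_univ x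
      exact this
    have hone := pos_case hf hHess hu hC heq hmp hge
    intro x y
    rw [hone x, hone y]

/-- Case (1) of Theorem 3.1 of the paper on Euclidean space: for a smooth convex weight
`f` (so `Ric_f = Hess f ≥ 0`), a smooth bounded standing solution of the Allen–Cahn
equation `Δ_f u − u³ + u = 0` on ℝⁿ with `u² ≥ m² > 0` is constant. -/
theorem weighted_allen_cahn_liouville (n : ℕ)
    (f : EuclideanSpace ℝ (Fin n) → ℝ) (hf : ContDiff ℝ (⊤ : ℕ∞) f)
    (hHess : ∀ x v : EuclideanSpace ℝ (Fin n),
      0 ≤ fderiv ℝ (fun y => fderiv ℝ f y v) x v)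
    (u : EuclideanSpace ℝ (Fin n) → ℝ) (hu : ContDiff ℝ (⊤ : ℕ∞) u)
    (hbd : ∃ C : ℝ, ∀ x, |u x| ≤ C)
    (heq : ∀ x, eLapF f u x - u x ^ 3 + u x = 0)
    (hm : ∃ m : ℝ, 0 < m ∧ ∀ x, u x ^ 2 ≥ m ^ 2) :
    ∀ x y, u x = u y :=
  weighted_allen_cahn_liouville' n f hf hHess u hu hbd heq hm
end
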